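/- arXiv:1412.6722 — 7 statements merged into one kernel-verified Lean document; each statement's English description precedes it below -/
import Mathlib

section
/- In a finite 2-player game, if s is a perfect cooperative equilibrium (PCE) and s* is a Nash equilibrium, then for each player i, U_i(s) ≥ U_i(s*). -/
open scoped BigOperators

section GameDefs

variable {A1 A2 : Type} [Fintype A1] [Fintype A2]

/-- A mixed strategy over a finite action set: nonnegative weights summing to 1. -/
def IsMixed {A : Type} [Fintype A] (s : A → ℝ) : Prop :=
  (∀ a, 0 ≤ s a) ∧ ∑ a, s a = 1

/-- Expected utility of a utility function `u` under mixed strategies `s1`, `s2`. -/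
noncomputable def EU (u : A1 → A2 → ℝ) (s1 : A1 → ℝ) (s2 : A2 → ℝ) : ℝ :=
  ∑ a1, ∑ a2, s1 a1 * s2 a2 * u a1 a2

/-- `s2` is a best response of player 2 (with utility `u2`) to `s1`. -/
def IsBR2 (u2 : A1 → A2 → ℝ) (s1 : A1 → ℝ) (s2 : A2 → ℝ) : Prop :=
  IsMixed s2 ∧ ∀ t2, IsMixed t2 → EU u2 s1 t2 ≤ EU u2 s1 s2

/-- `s1` is a best response of player 1 (with utility `u1`) to `s2`. -/
def IsBR1 (u1 : A1 → A2 → ℝ) (s2 : A2 → ℝ) (s1 : A1 → ℝ) : Prop :=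
  IsMixed s1 ∧ ∀ t1, IsMixed t1 → EU u1 t1 s2 ≤ EU u1 s1 s2

/-- `BU1`: the best utility player 1 can obtain if player 2 best responds. -/
noncomputable def BU1 (u1 u2 : A1 → A2 → ℝ) : ℝ :=
  sSup {x | ∃ s1 s2, IsMixed s1 ∧ IsBR2 u2 s1 s2 ∧ x = EU u1 s1 s2}

/-- `BU2`: the best utility player 2 can obtain if player 1 best responds. -/
noncomputable def BU2 (u1 u2 : A1 → A2 → ℝ) : ℝ :=
  sSup {x | ∃ s1 s2, IsMixed s2 ∧ IsBR1 u1 s2 s1 ∧ x = EU u2 s1 s2}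

/-- A (mixed) strategy profile. -/
def IsProfile (s : (A1 → ℝ) × (A2 → ℝ)) : Prop := IsMixed s.1 ∧ IsMixed s.2

/-- Perfect cooperative equilibrium. -/
def IsPCE (u1 u2 : A1 → A2 → ℝ) (s : (A1 → ℝ) × (A2 → ℝ)) : Prop :=
  IsProfile s ∧ BU1 u1 u2 ≤ EU u1 s.1 s.2 ∧ BU2 u1 u2 ≤ EU u2 s.1 s.2

/-- Nash equilibrium. -/
def IsNE (u1 u2 : A1 → A2 → ℝ) (s : (A1 → ℝ) × (A2 → ℝ)) : Prop :=
  IsBR1 u1 s.2 s.1 ∧ IsBR2 u2 s.1 s.2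

/-- `s` Pareto dominates `s'`. -/
def ParetoDom (u1 u2 : A1 → A2 → ℝ) (s s' : (A1 → ℝ) × (A2 → ℝ)) : Prop :=
  EU u1 s'.1 s'.2 ≤ EU u1 s.1 s.2 ∧ EU u2 s'.1 s'.2 ≤ EU u2 s.1 s.2

/-- `s` strongly Pareto dominates `s'`. -/
def StrongParetoDom (u1 u2 : A1 → A2 → ℝ) (s s' : (A1 → ℝ) × (A2 → ℝ)) : Prop :=
  ParetoDom u1 u2 s s' ∧
    (EU u1 s'.1 s'.2 < EU u1 s.1 s.2 ∨ EU u2 s'.1 s'.2 < EU u2 s.1 s.2)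

/-- α-perfect cooperative equilibrium. -/
def IsAlphaPCE (u1 u2 : A1 → A2 → ℝ) (α : ℝ) (s : (A1 → ℝ) × (A2 → ℝ)) : Prop :=
  IsProfile s ∧ α + BU1 u1 u2 ≤ EU u1 s.1 s.2 ∧ α + BU2 u1 u2 ≤ EU u2 s.1 s.2

/-- Max-PCE: an α-PCE such that no α'-PCE exists for α' > α. -/
def IsMPCE (u1 u2 : A1 → A2 → ℝ) (s : (A1 → ℝ) × (A2 → ℝ)) : Prop :=
  ∃ α, IsAlphaPCE u1 u2 α s ∧ ∀ α' s', IsAlphaPCE u1 u2 α' s' → α' ≤ α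

/-- Cooperative equilibrium: every deviation is either unprofitable when the other
player best responds, or leaves the other player strictly worse off no matter what,
in which case the other player can punish. -/
def IsCE (u1 u2 : A1 → A2 → ℝ) (s : (A1 → ℝ) × (A2 → ℝ)) : Prop :=
  IsProfile s ∧
  (∀ s1', IsMixed s1' →
    (sSup {x | ∃ s2', IsBR2 u2 s1' s2' ∧ x = EU u1 s1' s2'} ≤ EU u1 s.1 s.2) ∨
    (sSup {x | ∃ s2', IsMixed s2' ∧ x = EU u2 s1' s2'} < EU u2 s.1 s.2 ∧
      ∃ s2', IsMixed s2' ∧ EU u1 s1' s2' ≤ EU u1 s.1 s.2)) ∧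
  (∀ s2', IsMixed s2' →
    (sSup {x | ∃ s1', IsBR1 u1 s2' s1' ∧ x = EU u2 s1' s2'} ≤ EU u2 s.1 s.2) ∨
    (sSup {x | ∃ s1', IsMixed s1' ∧ x = EU u1 s1' s2'} < EU u1 s.1 s.2 ∧
      ∃ s1', IsMixed s1' ∧ EU u2 s1' s2' ≤ EU u2 s.1 s.2))

end GameDefs

section Aux

variable {A1 A2 : Type} [Fintype A1] [Fintype A2]

lemma nonempty_of_isMixed {A : Type} [Fintype A] {s : A → ℝ} (h : IsMixed s) :
    Nonempty A := by
  by_contra hne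
  have : IsEmpty A := not_nonempty_iff.mp hne
  have := h.2
  simp [Finset.sum_of_isEmpty] at this

lemma EU_le_bound (u : A1 → A2 → ℝ) {s1 : A1 → ℝ} {s2 : A2 → ℝ}
    (h1 : IsMixed s1) (h2 : IsMixed s2) (M : ℝ) (hM : ∀ a1 a2, u a1 a2 ≤ M)
    (hM0 : 0 ≤ M) :
    EU u s1 s2 ≤ M := by
  have : EU u s1 s2 ≤ ∑ a1, ∑ a2, s1 a1 * s2 a2 * M := by
    apply Finset.sum_le_sum; intro a1 _
    apply Finset.sum_le_sum; intro a2 _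
    exact mul_le_mul_of_nonneg_left (hM a1 a2) (mul_nonneg (h1.1 a1) (h2.1 a2))
  calc EU u s1 s2 ≤ ∑ a1, ∑ a2, s1 a1 * s2 a2 * M := this
    _ = (∑ a1, s1 a1) * (∑ a2, s2 a2) * M := by
        rw [Finset.sum_mul, Finset.sum_mul]
        congr 1; funext a1
        rw [Finset.mul_sum, Finset.sum_mul]
    _ = M := by rw [h1.2, h2.2]; ring

lemma bdd_of_mixed (u : A1 → A2 → ℝ)
    (S : Set ℝ) (hS : ∀ x ∈ S, ∃ s1 s2, IsMixed s1 ∧ IsMixed s2 ∧ x = EU u s1 s2) :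
    BddAbove S := by
  by_cases hne : Nonempty A1 ∧ Nonempty A2
  · obtain ⟨h1, h2⟩ := hne
    set M : ℝ := max 0 (Finset.univ.sup' (Finset.univ_nonempty) fun a1 =>
      Finset.univ.sup' (Finset.univ_nonempty) fun a2 => u a1 a2) with hMdef
    refine ⟨M, fun x hx => ?_⟩
    obtain ⟨s1, s2, hm1, hm2, rfl⟩ := hS x hx
    refine EU_le_bound u hm1 hm2 M (fun a1 a2 => ?_) (le_max_left _ _)
    refine le_trans ?_ (le_max_right _ _)
    exact le_trans (Finset.le_sup' _ (Finset.mem_univ a2))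
      (Finset.le_sup' (f := fun a1 => Finset.univ.sup' Finset.univ_nonempty fun a2 => u a1 a2)
        (Finset.mem_univ a1))
  · refine ⟨0, fun x hx => ?_⟩
    obtain ⟨s1, s2, hm1, hm2, rfl⟩ := hS x hx
    exact absurd ⟨nonempty_of_isMixed hm1, nonempty_of_isMixed hm2⟩ hne

lemma bdd_BU1 (u1 u2 : A1 → A2 → ℝ) :
    BddAbove {x | ∃ s1 s2, IsMixed s1 ∧ IsBR2 u2 s1 s2 ∧ x = EU u1 s1 s2} := by
  apply bdd_of_mixed u1
  rintro x ⟨s1, s2, h1, h2, rfl⟩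
  exact ⟨s1, s2, h1, h2.1, rfl⟩

lemma bdd_BU2 (u1 u2 : A1 → A2 → ℝ) :
    BddAbove {x | ∃ s1 s2, IsMixed s2 ∧ IsBR1 u1 s2 s1 ∧ x = EU u2 s1 s2} := by
  apply bdd_of_mixed u2
  rintro x ⟨s1, s2, h2, h1, rfl⟩
  exact ⟨s1, s2, h1.1, h2, rfl⟩

end Aux

/-- in a finite 2-player game, every player does at least as well
in a PCE as in any Nash equilibrium. -/
theorem pce_ge_ne {A1 A2 : Type} [Fintype A1] [Fintype A2]
    (u1 u2 : A1 → A2 → ℝ) (s sstar : (A1 → ℝ) × (A2 → ℝ))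
    (hs : IsPCE u1 u2 s) (hstar : IsNE u1 u2 sstar) :
    EU u1 sstar.1 sstar.2 ≤ EU u1 s.1 s.2 ∧ EU u2 sstar.1 sstar.2 ≤ EU u2 s.1 s.2 := by
  obtain ⟨hprof, h1, h2⟩ := hs
  obtain ⟨hbr1, hbr2⟩ := hstar
  constructor
  · refine le_trans (le_csSup (bdd_BU1 u1 u2) ?_) h1
    exact ⟨sstar.1, sstar.2, hbr1.1, hbr2, rfl⟩
  · refine le_trans (le_csSup (bdd_BU2 u1 u2) ?_) h2
    exact ⟨sstar.1, sstar.2, hbr2.1, hbr1, rfl⟩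
end

section
/- In a finite 2-player game, every Pareto-optimal M-PCE is a cooperative equilibrium (CE). -/
open scoped BigOperators

section Helpers

open Finset

variable {A1 A2 : Type} [Fintype A1] [Fintype A2]

lemma nonempty_of_mixed {A : Type} [Fintype A] {t : A → ℝ} (h : IsMixed t) :
    Nonempty A := by
  by_contra hc
  have he : IsEmpty A := not_nonempty_iff.mp hc
  have := h.2
  simp [Finset.univ_eq_empty] at this

lemma EU_eq_sum2 (u : A1 → A2 → ℝ) (s1 : A1 → ℝ) (s2 : A2 → ℝ) :
    EU u s1 s2 = ∑ a2, s2 a2 * ∑ a1, s1 a1 * u a1 a2 := by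
  rw [EU, Finset.sum_comm]
  refine Finset.sum_congr rfl fun a2 _ => ?_
  rw [Finset.mul_sum]
  refine Finset.sum_congr rfl fun a1 _ => by ring

lemma EU_eq_sum1 (u : A1 → A2 → ℝ) (s1 : A1 → ℝ) (s2 : A2 → ℝ) :
    EU u s1 s2 = ∑ a1, s1 a1 * ∑ a2, s2 a2 * u a1 a2 := by
  rw [EU]
  refine Finset.sum_congr rfl fun a1 _ => ?_
  rw [Finset.mul_sum]
  refine Finset.sum_congr rfl fun a2 _ => by ring

lemma EU_le_max (u : A1 → A2 → ℝ) {s1 : A1 → ℝ} {s2 : A2 → ℝ}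
    (h1 : IsMixed s1) (h2 : IsMixed s2) {M : ℝ} (hM : ∀ a b, u a b ≤ M) :
    EU u s1 s2 ≤ M := by
  have hstep : EU u s1 s2 ≤ ∑ a1, ∑ a2, s1 a1 * s2 a2 * M := by
    rw [EU]
    refine Finset.sum_le_sum fun a1 _ => Finset.sum_le_sum fun a2 _ => ?_
    exact mul_le_mul_of_nonneg_left (hM a1 a2) (mul_nonneg (h1.1 a1) (h2.1 a2))
  have heq : ∑ a1, ∑ a2, s1 a1 * s2 a2 * M = M := by
    have hinner : ∀ a1, ∑ a2, s1 a1 * s2 a2 * M = s1 a1 * M := fun a1 => by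
      rw [← Finset.sum_mul, ← Finset.mul_sum, h2.2, mul_one]
    rw [Finset.sum_congr rfl fun a1 _ => hinner a1, ← Finset.sum_mul, h1.2, one_mul]
  linarith

/-- There is a (pure) mixed strategy for player 2 maximizing `EU u s1 ·`. -/
lemma exists_max2 (u : A1 → A2 → ℝ) (s1 : A1 → ℝ) (hA2 : Nonempty A2) :
    ∃ s2, IsMixed s2 ∧ ∀ t2, IsMixed t2 → EU u s1 t2 ≤ EU u s1 s2 := by
  classical
  set c : A2 → ℝ := fun b => ∑ a1, s1 a1 * u a1 b with hc
  obtain ⟨b0, -, hb0⟩ := Finset.exists_max_image (Finset.univ : Finset A2) c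
    ⟨Classical.arbitrary A2, Finset.mem_univ _⟩
  refine ⟨fun b => if b = b0 then 1 else 0, ⟨fun b => by positivity, by simp⟩, ?_⟩
  intro t2 ht2
  have hval : EU u s1 (fun b => if b = b0 then 1 else 0) = c b0 := by
    rw [EU_eq_sum2]
    simp [hc]
  rw [hval, EU_eq_sum2]
  calc ∑ a2, t2 a2 * c a2 ≤ ∑ a2, t2 a2 * c b0 := by
        refine Finset.sum_le_sum fun a2 _ => ?_
        exact mul_le_mul_of_nonneg_left (hb0 a2 (Finset.mem_univ _)) (ht2.1 a2)
    _ = c b0 := by rw [← Finset.sum_mul, ht2.2, one_mul]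

/-- There is a (pure) mixed strategy for player 1 maximizing `EU u · s2`. -/
lemma exists_max1 (u : A1 → A2 → ℝ) (s2 : A2 → ℝ) (hA1 : Nonempty A1) :
    ∃ s1, IsMixed s1 ∧ ∀ t1, IsMixed t1 → EU u t1 s2 ≤ EU u s1 s2 := by
  classical
  set c : A1 → ℝ := fun a => ∑ a2, s2 a2 * u a a2 with hc
  obtain ⟨a0, -, ha0⟩ := Finset.exists_max_image (Finset.univ : Finset A1) c
    ⟨Classical.arbitrary A1, Finset.mem_univ _⟩
  refine ⟨fun a => if a = a0 then 1 else 0, ⟨fun a => by positivity, by simp⟩, ?_⟩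
  intro t1 ht1
  have hval : EU u (fun a => if a = a0 then 1 else 0) s2 = c a0 := by
    rw [EU_eq_sum1]
    simp [hc]
  rw [hval, EU_eq_sum1]
  calc ∑ a1, t1 a1 * c a1 ≤ ∑ a1, t1 a1 * c a0 := by
        refine Finset.sum_le_sum fun a1 _ => ?_
        exact mul_le_mul_of_nonneg_left (ha0 a1 (Finset.mem_univ _)) (ht1.1 a1)
    _ = c a0 := by rw [← Finset.sum_mul, ht1.2, one_mul]

end Helpers

/-- every Pareto-optimal M-PCE is a cooperative equilibrium. -/
theorem paretoOptimal_mpce_isCE {A1 A2 : Type} [Fintype A1] [Fintype A2]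
    (u1 u2 : A1 → A2 → ℝ) (s : (A1 → ℝ) × (A2 → ℝ))
    (hm : IsMPCE u1 u2 s)
    (hpo : ¬∃ s', IsProfile s' ∧ StrongParetoDom u1 u2 s' s) :
    IsCE u1 u2 s := by
  classical
  obtain ⟨α, ⟨hprof, hU1, hU2⟩, hmax⟩ := hm
  have h1 : IsMixed s.1 := hprof.1
  have h2 : IsMixed s.2 := hprof.2
  have hA1 : Nonempty A1 := nonempty_of_mixed h1
  have hA2 : Nonempty A2 := nonempty_of_mixed h2
  -- global bounds on the payoff functions
  obtain ⟨p1, -, hp1⟩ := Finset.exists_max_image (Finset.univ : Finset (A1 × A2))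
    (fun p => u1 p.1 p.2) ⟨⟨Classical.arbitrary A1, Classical.arbitrary A2⟩, Finset.mem_univ _⟩
  obtain ⟨p2, -, hp2⟩ := Finset.exists_max_image (Finset.univ : Finset (A1 × A2))
    (fun p => u2 p.1 p.2) ⟨⟨Classical.arbitrary A1, Classical.arbitrary A2⟩, Finset.mem_univ _⟩
  set M1 : ℝ := u1 p1.1 p1.2 with hM1def
  set M2 : ℝ := u2 p2.1 p2.2 with hM2def
  have hM1 : ∀ a b, u1 a b ≤ M1 := fun a b => hp1 ⟨a, b⟩ (Finset.mem_univ _)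
  have hM2 : ∀ a b, u2 a b ≤ M2 := fun a b => hp2 ⟨a, b⟩ (Finset.mem_univ _)
  have hbdd1 : BddAbove {x | ∃ s1 s2, IsMixed s1 ∧ IsBR2 u2 s1 s2 ∧ x = EU u1 s1 s2} := by
    refine ⟨M1, ?_⟩
    rintro x ⟨t1, t2, ht1, hbr, rfl⟩
    exact EU_le_max u1 ht1 hbr.1 hM1
  have hbdd2 : BddAbove {x | ∃ s1 s2, IsMixed s2 ∧ IsBR1 u1 s2 s1 ∧ x = EU u2 s1 s2} := by
    refine ⟨M2, ?_⟩
    rintro x ⟨t1, t2, ht2, hbr, rfl⟩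
    exact EU_le_max u2 hbr.1 ht2 hM2
  refine ⟨hprof, ?_, ?_⟩
  · -- deviations of player 1
    intro s1' hs1'
    by_cases hcase : ∀ s2', IsBR2 u2 s1' s2' → EU u1 s1' s2' ≤ EU u1 s.1 s.2
    · left
      obtain ⟨s2m, hs2m, hmax2⟩ := exists_max2 u2 s1' hA2
      refine csSup_le ⟨_, ⟨s2m, ⟨hs2m, hmax2⟩, rfl⟩⟩ ?_
      rintro x ⟨t2, hbr, rfl⟩
      exact hcase t2 hbr
    · right
      push_neg at hcase
      obtain ⟨s2s, hbrs, hgt⟩ := hcase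
      have hle : EU u1 s1' s2s ≤ BU1 u1 u2 :=
        le_csSup hbdd1 ⟨s1', s2s, hs1', hbrs, rfl⟩
      have hαneg : α < 0 := by linarith
      constructor
      · -- player 2 is strictly worse off, no matter what
        have key : ∀ t2, IsMixed t2 → EU u2 s1' t2 < EU u2 s.1 s.2 := by
          intro t2 ht2
          by_contra hcontra
          push_neg at hcontra
          exact hpo ⟨(s1', s2s), ⟨hs1', hbrs.1⟩,
            ⟨⟨le_of_lt hgt, le_trans hcontra (hbrs.2 t2 ht2)⟩, Or.inl hgt⟩⟩
        obtain ⟨t2m, ht2m, hmax2⟩ := exists_max2 u2 s1' hA2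
        calc sSup {x | ∃ s2', IsMixed s2' ∧ x = EU u2 s1' s2'}
            ≤ EU u2 s1' t2m := by
              refine csSup_le ⟨_, ⟨t2m, ht2m, rfl⟩⟩ ?_
              rintro x ⟨t2, ht2, rfl⟩
              exact hmax2 t2 ht2
          _ < EU u2 s.1 s.2 := key t2m ht2m
      · -- player 2 can punish
        by_contra hnp
        push_neg at hnp
        obtain ⟨t1b, ht1b, hbr1b⟩ := exists_max1 u1 s.2 hA1
        have hne2 : Set.Nonempty {x | ∃ s1 s2, IsMixed s2 ∧ IsBR1 u1 s2 s1 ∧ x = EU u2 s1 s2} :=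
          ⟨_, t1b, s.2, h2, ⟨ht1b, hbr1b⟩, rfl⟩
        have hlt : BU2 u1 u2 + α < BU2 u1 u2 := by linarith
        obtain ⟨x, hxmem, hx⟩ := exists_lt_of_lt_csSup hne2 (by exact hlt)
        obtain ⟨t1, t2, ht2, hbr1, rfl⟩ := hxmem
        have h1t : EU u1 s1' t2 ≤ EU u1 t1 t2 := hbr1.2 s1' hs1'
        have h1gt : α + BU1 u1 u2 < EU u1 t1 t2 := by
          have := hnp t2 ht2
          linarith
        have h2gt : α + BU2 u1 u2 < EU u2 t1 t2 := by linarith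
        set α' := min (EU u1 t1 t2 - BU1 u1 u2) (EU u2 t1 t2 - BU2 u1 u2) with hα'
        have hapril : IsAlphaPCE u1 u2 α' (t1, t2) := by
          refine ⟨⟨hbr1.1, ht2⟩, ?_, ?_⟩
          · have := min_le_left (EU u1 t1 t2 - BU1 u1 u2) (EU u2 t1 t2 - BU2 u1 u2)
            simp only at this ⊢
            linarith
          · have := min_le_right (EU u1 t1 t2 - BU1 u1 u2) (EU u2 t1 t2 - BU2 u1 u2)
            simp only at this ⊢
            linarith
        have hle' := hmax α' (t1, t2) hapril
        have hgt' : α < α' := lt_min (by linarith) (by linarith)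
        linarith
  · -- deviations of player 2 (symmetric)
    intro s2' hs2'
    by_cases hcase : ∀ s1', IsBR1 u1 s2' s1' → EU u2 s1' s2' ≤ EU u2 s.1 s.2
    · left
      obtain ⟨s1m, hs1m, hmax1⟩ := exists_max1 u1 s2' hA1
      refine csSup_le ⟨_, ⟨s1m, ⟨hs1m, hmax1⟩, rfl⟩⟩ ?_
      rintro x ⟨t1, hbr, rfl⟩
      exact hcase t1 hbr
    · right
      push_neg at hcase
      obtain ⟨s1s, hbrs, hgt⟩ := hcase
      have hle : EU u2 s1s s2' ≤ BU2 u1 u2 :=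
        le_csSup hbdd2 ⟨s1s, s2', hs2', hbrs, rfl⟩
      have hαneg : α < 0 := by linarith
      constructor
      · have key : ∀ t1, IsMixed t1 → EU u1 t1 s2' < EU u1 s.1 s.2 := by
          intro t1 ht1
          by_contra hcontra
          push_neg at hcontra
          exact hpo ⟨(s1s, s2'), ⟨hbrs.1, hs2'⟩,
            ⟨⟨le_trans hcontra (hbrs.2 t1 ht1), le_of_lt hgt⟩, Or.inr hgt⟩⟩
        obtain ⟨t1m, ht1m, hmax1⟩ := exists_max1 u1 s2' hA1
        calc sSup {x | ∃ s1', IsMixed s1' ∧ x = EU u1 s1' s2'}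
            ≤ EU u1 t1m s2' := by
              refine csSup_le ⟨_, ⟨t1m, ht1m, rfl⟩⟩ ?_
              rintro x ⟨t1, ht1, rfl⟩
              exact hmax1 t1 ht1
          _ < EU u1 s.1 s.2 := key t1m ht1m
      · by_contra hnp
        push_neg at hnp
        obtain ⟨t2b, ht2b, hbr2b⟩ := exists_max2 u2 s.1 hA2
        have hne1 : Set.Nonempty {x | ∃ s1 s2, IsMixed s1 ∧ IsBR2 u2 s1 s2 ∧ x = EU u1 s1 s2} :=
          ⟨_, s.1, t2b, h1, ⟨ht2b, hbr2b⟩, rfl⟩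
        have hlt : BU1 u1 u2 + α < BU1 u1 u2 := by linarith
        obtain ⟨x, hxmem, hx⟩ := exists_lt_of_lt_csSup hne1 (by exact hlt)
        obtain ⟨t1, t2, ht1, hbr2, rfl⟩ := hxmem
        have h2t : EU u2 t1 s2' ≤ EU u2 t1 t2 := hbr2.2 s2' hs2'
        have h2gt : α + BU2 u1 u2 < EU u2 t1 t2 := by
          have := hnp t1 ht1
          linarith
        have h1gt : α + BU1 u1 u2 < EU u1 t1 t2 := by linarith
        set α' := min (EU u1 t1 t2 - BU1 u1 u2) (EU u2 t1 t2 - BU2 u1 u2) with hα'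
        have hapril : IsAlphaPCE u1 u2 α' (t1, t2) := by
          refine ⟨⟨ht1, hbr2.1⟩, ?_, ?_⟩
          · have := min_le_left (EU u1 t1 t2 - BU1 u1 u2) (EU u2 t1 t2 - BU2 u1 u2)
            simp only at this ⊢
            linarith
          · have := min_le_right (EU u1 t1 t2 - BU1 u1 u2) (EU u2 t1 t2 - BU2 u1 u2)
            simp only at this ⊢
            linarith
        have hle' := hmax α' (t1, t2) hapril
        have hgt' : α < α' := lt_min (by linarith) (by linarith)
        linarith
end

section
/- In a finite 2-player game, any strategy profile that Pareto dominates a CE is itself a CE, and consequently every finite 2-player game has a Pareto-optimal CE. -/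
open scoped BigOperators

section AuxLemmas

open Set

variable {A1 A2 : Type} [Fintype A1] [Fintype A2]

private lemma isClosed_mixed {A : Type} [Fintype A] : IsClosed {s : A → ℝ | IsMixed s} := by
  have h : {s : A → ℝ | IsMixed s} =
      (⋂ a, {s : A → ℝ | 0 ≤ s a}) ∩ {s : A → ℝ | ∑ a, s a = 1} := by
    ext s; simp [IsMixed, Set.mem_iInter, Set.mem_setOf_eq]
  rw [h]
  exact (isClosed_iInter fun a => isClosed_le continuous_const (continuous_apply a)).inter
    (isClosed_eq (continuous_finset_sum _ fun a _ => continuous_apply a) continuous_const)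

private lemma isCompact_mixed {A : Type} [Fintype A] : IsCompact {s : A → ℝ | IsMixed s} := by
  refine IsCompact.of_isClosed_subset (isCompact_Icc (a := (0 : A → ℝ)) (b := 1))
    isClosed_mixed ?_
  rintro s ⟨hnn, hsum⟩
  rw [Set.mem_Icc]
  refine ⟨Pi.le_def.mpr fun a => hnn a, Pi.le_def.mpr fun a => ?_⟩
  calc s a ≤ ∑ b, s b := Finset.single_le_sum (fun b _ => hnn b) (Finset.mem_univ a)
  _ = 1 := hsum

private lemma mixed_nonempty {A : Type} [Fintype A] [Nonempty A] :
    ∃ s : A → ℝ, IsMixed s := by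
  classical
  obtain ⟨a0⟩ := (inferInstance : Nonempty A)
  refine ⟨fun a => if a = a0 then 1 else 0, fun a => by dsimp only; split <;> norm_num, ?_⟩
  simp

private lemma continuous_EU (u : A1 → A2 → ℝ) :
    Continuous (fun p : (A1 → ℝ) × (A2 → ℝ) => EU u p.1 p.2) := by
  unfold EU
  exact continuous_finset_sum _ fun a1 _ => continuous_finset_sum _ fun a2 _ =>
    (((continuous_apply a1).comp continuous_fst).mul
      ((continuous_apply a2).comp continuous_snd)).mul continuous_const

private lemma exists_EU_bound [Nonempty A1] [Nonempty A2] (u : A1 → A2 → ℝ) :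
    ∃ M : ℝ, ∀ s1 s2, IsMixed s1 → IsMixed s2 → EU u s1 s2 ≤ M := by
  have hK : IsCompact ({s : A1 → ℝ | IsMixed s} ×ˢ {s : A2 → ℝ | IsMixed s}) :=
    isCompact_mixed.prod isCompact_mixed
  obtain ⟨s1, h1⟩ := mixed_nonempty (A := A1)
  obtain ⟨s2, h2⟩ := mixed_nonempty (A := A2)
  obtain ⟨x, -, hx⟩ := hK.exists_isMaxOn ⟨(s1, s2), Set.mem_prod.mpr ⟨h1, h2⟩⟩
    (continuous_EU u).continuousOn
  rw [isMaxOn_iff] at hx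
  exact ⟨EU u x.1 x.2, fun t1 t2 ht1 ht2 => hx (t1, t2) (Set.mem_prod.mpr ⟨ht1, ht2⟩)⟩

private lemma exists_BR2 [Nonempty A2] (u2 : A1 → A2 → ℝ) (s1 : A1 → ℝ) :
    ∃ s2, IsBR2 u2 s1 s2 := by
  obtain ⟨t2, ht2⟩ := mixed_nonempty (A := A2)
  have hc : Continuous (fun s2 : A2 → ℝ => EU u2 s1 s2) :=
    (continuous_EU u2).comp (continuous_const.prodMk continuous_id)
  obtain ⟨s2, hs2, hmax⟩ := isCompact_mixed.exists_isMaxOn ⟨t2, ht2⟩ hc.continuousOn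
  rw [isMaxOn_iff] at hmax
  exact ⟨s2, hs2, fun t ht => hmax t ht⟩

private lemma exists_BR1 [Nonempty A1] (u1 : A1 → A2 → ℝ) (s2 : A2 → ℝ) :
    ∃ s1, IsBR1 u1 s2 s1 := by
  obtain ⟨t1, ht1⟩ := mixed_nonempty (A := A1)
  have hc : Continuous (fun s1 : A1 → ℝ => EU u1 s1 s2) :=
    (continuous_EU u1).comp (continuous_id.prodMk continuous_const)
  obtain ⟨s1, hs1, hmax⟩ := isCompact_mixed.exists_isMaxOn ⟨t1, ht1⟩ hc.continuousOn
  rw [isMaxOn_iff] at hmax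
  exact ⟨s1, hs1, fun t ht => hmax t ht⟩

private lemma bddAbove_BU1set [Nonempty A1] [Nonempty A2] (u1 u2 : A1 → A2 → ℝ) :
    BddAbove {x | ∃ s1 s2, IsMixed s1 ∧ IsBR2 u2 s1 s2 ∧ x = EU u1 s1 s2} := by
  obtain ⟨M, hM⟩ := exists_EU_bound u1
  exact ⟨M, by rintro x ⟨s1, s2, h1, hbr, rfl⟩; exact hM s1 s2 h1 hbr.1⟩

private lemma BU2_attained [Nonempty A1] [Nonempty A2] (u1 u2 : A1 → A2 → ℝ) :
    ∃ c : (A1 → ℝ) × (A2 → ℝ), IsMixed c.2 ∧ IsBR1 u1 c.2 c.1 ∧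
      BU2 u1 u2 = EU u2 c.1 c.2 := by
  classical
  set C : Set ((A1 → ℝ) × (A2 → ℝ)) := {p | IsMixed p.2 ∧ IsBR1 u1 p.2 p.1} with hC
  have hCsub : C ⊆ {s : A1 → ℝ | IsMixed s} ×ˢ {s : A2 → ℝ | IsMixed s} := by
    rintro p ⟨h2, hbr⟩; exact Set.mem_prod.mpr ⟨hbr.1, h2⟩
  have hclosed : IsClosed C := by
    have hCeq : C = (({p : (A1 → ℝ) × (A2 → ℝ) | IsMixed p.2}) ∩
        ({p : (A1 → ℝ) × (A2 → ℝ) | IsMixed p.1})) ∩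
        ⋂ (t1 : A1 → ℝ), ⋂ (_ : IsMixed t1),
          {p : (A1 → ℝ) × (A2 → ℝ) | EU u1 t1 p.2 ≤ EU u1 p.1 p.2} := by
      ext p
      simp only [hC, Set.mem_setOf_eq, Set.mem_inter_iff, Set.mem_iInter, IsBR1]
      tauto
    rw [hCeq]
    refine IsClosed.inter (IsClosed.inter ?_ ?_) ?_
    · exact isClosed_mixed.preimage continuous_snd
    · exact isClosed_mixed.preimage continuous_fst
    · refine isClosed_iInter fun t1 => isClosed_iInter fun _ => ?_
      exact isClosed_le ((continuous_EU u1).comp (continuous_const.prodMk continuous_snd))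
        (continuous_EU u1)
  have hcomp : IsCompact C :=
    IsCompact.of_isClosed_subset (isCompact_mixed.prod isCompact_mixed) hclosed hCsub
  obtain ⟨s20, h20⟩ := mixed_nonempty (A := A2)
  obtain ⟨s10, h10⟩ := exists_BR1 u1 s20
  have hne : C.Nonempty := ⟨(s10, s20), ⟨h20, h10⟩⟩
  obtain ⟨c, hcC, hcmax⟩ := hcomp.exists_isMaxOn hne (continuous_EU u2).continuousOn
  rw [isMaxOn_iff] at hcmax
  refine ⟨c, hcC.1, hcC.2, le_antisymm ?_ ?_⟩
  · refine csSup_le ⟨EU u2 c.1 c.2, c.1, c.2, hcC.1, hcC.2, rfl⟩ ?_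
    rintro x ⟨s1, s2, h2, hbr, rfl⟩
    exact hcmax (s1, s2) ⟨h2, hbr⟩
  · obtain ⟨M, hM⟩ := exists_EU_bound u2
    refine le_csSup ⟨M, ?_⟩ ⟨c.1, c.2, hcC.1, hcC.2, rfl⟩
    rintro x ⟨s1, s2, h2, hbr, rfl⟩
    exact hM s1 s2 hbr.1 h2

private lemma EU_swap (u : A1 → A2 → ℝ) (s1 : A1 → ℝ) (s2 : A2 → ℝ) :
    EU (fun a2 a1 => u a1 a2) s2 s1 = EU u s1 s2 := by
  unfold EU
  rw [Finset.sum_comm]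
  exact Finset.sum_congr rfl fun a1 _ => Finset.sum_congr rfl fun a2 _ => by ring

private lemma IsBR1_swap (u : A1 → A2 → ℝ) (s2 : A2 → ℝ) (s1 : A1 → ℝ) :
    IsBR1 u s2 s1 ↔ IsBR2 (fun a2 a1 => u a1 a2) s2 s1 := by
  unfold IsBR1 IsBR2
  simp_rw [EU_swap]

private lemma IsBR2_swap (u : A1 → A2 → ℝ) (s1 : A1 → ℝ) (s2 : A2 → ℝ) :
    IsBR2 u s1 s2 ↔ IsBR1 (fun a2 a1 => u a1 a2) s1 s2 := by
  unfold IsBR1 IsBR2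
  simp_rw [EU_swap]

private lemma BU1_swap (u1 u2 : A1 → A2 → ℝ) :
    BU1 (fun a2 a1 => u2 a1 a2) (fun a2 a1 => u1 a1 a2) = BU2 u1 u2 := by
  unfold BU1 BU2
  congr 1
  ext x
  constructor
  · rintro ⟨p1, p2, hm, hbr, rfl⟩
    exact ⟨p2, p1, hm, (IsBR1_swap u1 p1 p2).mpr hbr, (EU_swap u2 p2 p1)⟩
  · rintro ⟨p1, p2, hm, hbr, rfl⟩
    exact ⟨p2, p1, hm, (IsBR1_swap u1 p2 p1).mp hbr, (EU_swap u2 p1 p2).symm⟩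

private lemma BU2_swap (u1 u2 : A1 → A2 → ℝ) :
    BU2 (fun a2 a1 => u2 a1 a2) (fun a2 a1 => u1 a1 a2) = BU1 u1 u2 := by
  unfold BU1 BU2
  congr 1
  ext x
  constructor
  · rintro ⟨p1, p2, hm, hbr, rfl⟩
    exact ⟨p2, p1, hm, (IsBR2_swap u2 p2 p1).mpr hbr, (EU_swap u1 p2 p1)⟩
  · rintro ⟨p1, p2, hm, hbr, rfl⟩
    exact ⟨p2, p1, hm, (IsBR2_swap u2 p1 p2).mp hbr, (EU_swap u1 p1 p2).symm⟩

/-- Core lemma: the player-1 deviation condition of CE holds for any profile that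
maximizes `min (EU1 - BU1) (EU2 - BU2)` and is strongly Pareto optimal. -/
private lemma ce_first_bullet [Nonempty A1] [Nonempty A2] (u1 u2 : A1 → A2 → ℝ)
    (s : (A1 → ℝ) × (A2 → ℝ)) (hs : IsProfile s)
    (hmax : ∀ t : (A1 → ℝ) × (A2 → ℝ), IsProfile t →
      min (EU u1 t.1 t.2 - BU1 u1 u2) (EU u2 t.1 t.2 - BU2 u1 u2) ≤
      min (EU u1 s.1 s.2 - BU1 u1 u2) (EU u2 s.1 s.2 - BU2 u1 u2))
    (hpo : ∀ t : (A1 → ℝ) × (A2 → ℝ), IsProfile t →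
      EU u1 s.1 s.2 < EU u1 t.1 t.2 → EU u2 t.1 t.2 < EU u2 s.1 s.2) :
    ∀ s1', IsMixed s1' →
      (sSup {x | ∃ s2', IsBR2 u2 s1' s2' ∧ x = EU u1 s1' s2'} ≤ EU u1 s.1 s.2) ∨
      (sSup {x | ∃ s2', IsMixed s2' ∧ x = EU u2 s1' s2'} < EU u2 s.1 s.2 ∧
        ∃ s2', IsMixed s2' ∧ EU u1 s1' s2' ≤ EU u1 s.1 s.2) := by
  intro s1' h1'
  by_cases hall : ∀ s2', IsBR2 u2 s1' s2' → EU u1 s1' s2' ≤ EU u1 s.1 s.2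
  · left
    obtain ⟨r2, hr2⟩ := exists_BR2 u2 s1'
    refine csSup_le ⟨EU u1 s1' r2, r2, hr2, rfl⟩ ?_
    rintro x ⟨s2', hbr, rfl⟩
    exact hall s2' hbr
  · push_neg at hall
    obtain ⟨s2', hbr, hgt⟩ := hall
    right
    have h2lt : EU u2 s1' s2' < EU u2 s.1 s.2 := hpo (s1', s2') ⟨h1', hbr.1⟩ hgt
    constructor
    · refine lt_of_le_of_lt (csSup_le ⟨EU u2 s1' s2', s2', hbr.1, rfl⟩ ?_) h2lt
      rintro x ⟨t2, ht2, rfl⟩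
      exact hbr.2 t2 ht2
    · by_contra hnone
      push_neg at hnone
      have hBU1ge : EU u1 s1' s2' ≤ BU1 u1 u2 :=
        le_csSup (bddAbove_BU1set u1 u2) ⟨s1', s2', h1', hbr, rfl⟩
      obtain ⟨c, hc2, hcbr, hBU2eq⟩ := BU2_attained u1 u2
      have hkey := hmax c ⟨hcbr.1, hc2⟩
      have h1c : EU u1 s.1 s.2 < EU u1 c.1 c.2 :=
        lt_of_lt_of_le (hnone c.2 hc2) (hcbr.2 s1' h1')
      have hmin1 : min (EU u1 s.1 s.2 - BU1 u1 u2) (EU u2 s.1 s.2 - BU2 u1 u2) ≤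
          EU u1 s.1 s.2 - BU1 u1 u2 := min_le_left _ _
      have h2c : EU u2 c.1 c.2 - BU2 u1 u2 = 0 := by rw [hBU2eq]; ring
      have hlt : min (EU u1 s.1 s.2 - BU1 u1 u2) (EU u2 s.1 s.2 - BU2 u1 u2) <
          min (EU u1 c.1 c.2 - BU1 u1 u2) (EU u2 c.1 c.2 - BU2 u1 u2) := by
        apply lt_min
        · linarith
        · linarith
      linarith

end AuxLemmas

/-- a profile Pareto dominating a CE is a CE, and consequently every
finite 2-player game has a Pareto-optimal CE. -/
theorem ce_closure_and_existence {A1 A2 : Type} [Fintype A1] [Fintype A2]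
    [Nonempty A1] [Nonempty A2] (u1 u2 : A1 → A2 → ℝ) :
    (∀ s s' : (A1 → ℝ) × (A2 → ℝ), IsCE u1 u2 s → IsProfile s' →
        ParetoDom u1 u2 s' s → IsCE u1 u2 s') ∧
    (∃ s, IsCE u1 u2 s ∧ ¬∃ s', IsProfile s' ∧ StrongParetoDom u1 u2 s' s) := by
  classical
  obtain ⟨σ10, hσ10⟩ := mixed_nonempty (A := A1)
  obtain ⟨σ20, hσ20⟩ := mixed_nonempty (A := A2)
  -- the function to maximize
  set F : (A1 → ℝ) × (A2 → ℝ) → ℝ := fun p =>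
    min (EU u1 p.1 p.2 - BU1 u1 u2) (EU u2 p.1 p.2 - BU2 u1 u2) with hF
  set G : (A1 → ℝ) × (A2 → ℝ) → ℝ := fun p =>
    EU u1 p.1 p.2 + EU u2 p.1 p.2 with hG
  have hFcont : Continuous F := Continuous.min
    ((continuous_EU u1).sub continuous_const) ((continuous_EU u2).sub continuous_const)
  have hGcont : Continuous G := (continuous_EU u1).add (continuous_EU u2)
  have hKeq : {p : (A1 → ℝ) × (A2 → ℝ) | IsProfile p}
      = {s : A1 → ℝ | IsMixed s} ×ˢ {s : A2 → ℝ | IsMixed s} := by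
    ext p; exact Iff.rfl
  have hK : IsCompact {p : (A1 → ℝ) × (A2 → ℝ) | IsProfile p} := by
    rw [hKeq]; exact isCompact_mixed.prod isCompact_mixed
  have hKne : Set.Nonempty {p : (A1 → ℝ) × (A2 → ℝ) | IsProfile p} :=
    ⟨(σ10, σ20), ⟨hσ10, hσ20⟩⟩
  obtain ⟨m, hmK, hmmax⟩ := hK.exists_isMaxOn hKne hFcont.continuousOn
  rw [isMaxOn_iff] at hmmax
  set S : Set ((A1 → ℝ) × (A2 → ℝ)) :=
    {p | IsProfile p} ∩ {p | F p = F m} with hS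
  have hScomp : IsCompact S := hK.inter_right (isClosed_eq hFcont continuous_const)
  have hSne : S.Nonempty := ⟨m, hmK, rfl⟩
  obtain ⟨σ, hσS, hσmax⟩ := hScomp.exists_isMaxOn hSne hGcont.continuousOn
  rw [isMaxOn_iff] at hσmax
  have hσP : IsProfile σ := hσS.1
  have hFσ : F σ = F m := hσS.2
  have hmaxσ : ∀ t : (A1 → ℝ) × (A2 → ℝ), IsProfile t → F t ≤ F σ := by
    intro t ht; rw [hFσ]; exact hmmax t ht
  have hlex : ∀ t : (A1 → ℝ) × (A2 → ℝ), IsProfile t → F t = F σ → G t ≤ G σ := by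
    intro t ht he; exact hσmax t ⟨ht, he.trans hFσ⟩
  -- strong Pareto optimality of σ
  have hponot : ¬∃ s', IsProfile s' ∧ StrongParetoDom u1 u2 s' σ := by
    rintro ⟨t, ht, ⟨hd1, hd2⟩, hstrict⟩
    have hFt : F σ ≤ F t := by
      simp only [hF]
      exact min_le_min (sub_le_sub_right hd1 _) (sub_le_sub_right hd2 _)
    have hGt : G σ < G t := by
      simp only [hG]
      rcases hstrict with h | h
      · linarith
      · linarith
    have := hlex t ht (le_antisymm (hmaxσ t ht) hFt)
    linarith
  have hpo1 : ∀ t : (A1 → ℝ) × (A2 → ℝ), IsProfile t →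
      EU u1 σ.1 σ.2 < EU u1 t.1 t.2 → EU u2 t.1 t.2 < EU u2 σ.1 σ.2 := by
    intro t ht hlt
    by_contra h
    push_neg at h
    exact hponot ⟨t, ht, ⟨hlt.le, h⟩, Or.inl hlt⟩
  have hpo2 : ∀ t : (A1 → ℝ) × (A2 → ℝ), IsProfile t →
      EU u2 σ.1 σ.2 < EU u2 t.1 t.2 → EU u1 t.1 t.2 < EU u1 σ.1 σ.2 := by
    intro t ht hlt
    by_contra h
    push_neg at h
    exact hponot ⟨t, ht, ⟨h, hlt.le⟩, Or.inr hlt⟩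
  have hmax1 : ∀ t : (A1 → ℝ) × (A2 → ℝ), IsProfile t →
      min (EU u1 t.1 t.2 - BU1 u1 u2) (EU u2 t.1 t.2 - BU2 u1 u2) ≤
      min (EU u1 σ.1 σ.2 - BU1 u1 u2) (EU u2 σ.1 σ.2 - BU2 u1 u2) := by
    intro t ht
    exact hmaxσ t ht
  -- first CE bullet
  have hbullet1 := ce_first_bullet u1 u2 σ hσP hmax1 hpo1
  -- second CE bullet via player swap
  have hbullet2' := ce_first_bullet (fun a2 a1 => u2 a1 a2) (fun a2 a1 => u1 a1 a2)
    (σ.2, σ.1) ⟨hσP.2, hσP.1⟩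
    (by
      intro t ht
      rw [BU1_swap u1 u2, BU2_swap u1 u2, EU_swap u2 t.2 t.1, EU_swap u1 t.2 t.1,
        EU_swap u2 σ.1 σ.2, EU_swap u1 σ.1 σ.2,
        min_comm (EU u2 t.2 t.1 - BU2 u1 u2) (EU u1 t.2 t.1 - BU1 u1 u2),
        min_comm (EU u2 σ.1 σ.2 - BU2 u1 u2) (EU u1 σ.1 σ.2 - BU1 u1 u2)]
      exact hmax1 (t.2, t.1) ⟨ht.2, ht.1⟩)
    (by
      intro t ht hlt
      rw [EU_swap u2 σ.1 σ.2, EU_swap u2 t.2 t.1] at hlt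
      rw [EU_swap u1 t.2 t.1, EU_swap u1 σ.1 σ.2]
      exact hpo2 (t.2, t.1) ⟨ht.2, ht.1⟩ hlt)
  have hbullet2 : ∀ s2', IsMixed s2' →
      (sSup {x | ∃ s1', IsBR1 u1 s2' s1' ∧ x = EU u2 s1' s2'} ≤ EU u2 σ.1 σ.2) ∨
      (sSup {x | ∃ s1', IsMixed s1' ∧ x = EU u1 s1' s2'} < EU u1 σ.1 σ.2 ∧
        ∃ s1', IsMixed s1' ∧ EU u2 s1' s2' ≤ EU u2 σ.1 σ.2) := by
    intro s2' h2'
    have hset1 : {x | ∃ t, IsBR2 (fun a2 a1 => u1 a1 a2) s2' t ∧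
        x = EU (fun a2 a1 => u2 a1 a2) s2' t}
        = {x | ∃ s1', IsBR1 u1 s2' s1' ∧ x = EU u2 s1' s2'} := by
      ext x
      constructor
      · rintro ⟨t, hbr, rfl⟩
        exact ⟨t, (IsBR1_swap u1 s2' t).mpr hbr, EU_swap u2 t s2'⟩
      · rintro ⟨t, hbr, rfl⟩
        exact ⟨t, (IsBR1_swap u1 s2' t).mp hbr, (EU_swap u2 t s2').symm⟩
    have hset2 : {x | ∃ t, IsMixed t ∧ x = EU (fun a2 a1 => u1 a1 a2) s2' t}
        = {x | ∃ s1', IsMixed s1' ∧ x = EU u1 s1' s2'} := by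
      ext x
      constructor
      · rintro ⟨t, ht, rfl⟩
        exact ⟨t, ht, EU_swap u1 t s2'⟩
      · rintro ⟨t, ht, rfl⟩
        exact ⟨t, ht, (EU_swap u1 t s2').symm⟩
    rcases hbullet2' s2' h2' with h | ⟨h, t, ht, hle⟩
    · left
      rw [hset1, EU_swap u2 σ.1 σ.2] at h
      exact h
    · right
      rw [hset2, EU_swap u1 σ.1 σ.2] at h
      refine ⟨h, t, ht, ?_⟩
      rw [EU_swap u2 t s2', EU_swap u2 σ.1 σ.2] at hle
      exact hle
  have hσCE : IsCE u1 u2 σ := ⟨hσP, hbullet1, hbullet2⟩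
  constructor
  · rintro s s' ⟨hsP, hb1, hb2⟩ hs'P ⟨hd1, hd2⟩
    refine ⟨hs'P, ?_, ?_⟩
    · intro s1' h1'
      rcases hb1 s1' h1' with h | ⟨h, t2, ht2, hle⟩
      · exact Or.inl (h.trans hd1)
      · exact Or.inr ⟨lt_of_lt_of_le h hd2, t2, ht2, hle.trans hd1⟩
    · intro s2' h2'
      rcases hb2 s2' h2' with h | ⟨h, t1, ht1, hle⟩
      · exact Or.inl (h.trans hd2)
      · exact Or.inr ⟨lt_of_lt_of_le h hd1, t1, ht1, hle.trans hd2⟩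
  · exact ⟨σ, hσCE, hponot⟩
end

section
/- In Prisoner's Dilemma with payoffs u(C,C)=(3,3), u(C,D)=(0,5), u(D,C)=(5,0), u(D,D)=(1,1), a mixed strategy profile s is a PCE if and only if min(U_1(s), U_2(s)) ≥ 1; in particular (Cooperate, Cooperate) and (Defect, Defect) are PCE. -/
open scoped BigOperators

/-- The point-mass (pure) strategy on action `a`. -/
def pt {A : Type} [DecidableEq A] (a : A) : A → ℝ := fun b => if b = a then 1 else 0

/-- Actions in Prisoner's Dilemma. -/
inductive PD | C | D
  deriving DecidableEq

instance : Fintype PD := ⟨{PD.C, PD.D}, fun x => by cases x <;> simp⟩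

/-- Player 1's payoffs in Prisoner's Dilemma. -/
def pdU1 : PD → PD → ℝ
  | PD.C, PD.C => 3
  | PD.C, PD.D => 0
  | PD.D, PD.C => 5
  | PD.D, PD.D => 1

/-- Player 2's payoffs in Prisoner's Dilemma. -/
def pdU2 : PD → PD → ℝ
  | PD.C, PD.C => 3
  | PD.C, PD.D => 5
  | PD.D, PD.C => 0
  | PD.D, PD.D => 1


/-!
Defect strictly dominates Cooperate, so against any mixed strategy the unique best response
is pure Defect, and against Defect the opponent earns at most `u(D, D) = 1`, attained at
`(D, D)`. Hence `BU₁ = 1`, and `BU₂ = 1` because the game is symmetric (`pdU2 = flip pdU1`).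
The PCE condition `U_i(s) ≥ BU_i` is then exactly `min (U₁ s) (U₂ s) ≥ 1`.
-/

section

variable {A A1 A2 : Type} [Fintype A] [Fintype A1] [Fintype A2]

lemma isMixed_pt [DecidableEq A] (a : A) : IsMixed (pt a) :=
  ⟨fun b => by unfold pt; split_ifs <;> norm_num, by simp [pt]⟩

lemma EU_pt_right [DecidableEq A2] (u : A1 → A2 → ℝ) (s1 : A1 → ℝ) (b : A2) :
    EU u s1 (pt b) = ∑ a, s1 a * u a b := by
  simp [EU, pt]

lemma EU_pt_pt [DecidableEq A1] [DecidableEq A2] (u : A1 → A2 → ℝ) (a : A1) (b : A2) :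
    EU u (pt a) (pt b) = u a b := by
  simp [EU_pt_right, pt]

lemma EU_flip (u : A1 → A2 → ℝ) (s1 : A1 → ℝ) (s2 : A2 → ℝ) :
    EU (flip u) s2 s1 = EU u s1 s2 := by
  rw [EU, EU, Finset.sum_comm]
  simp only [flip, mul_comm (s2 _)]

lemma isBR1_iff_isBR2_flip (u : A1 → A2 → ℝ) (s2 : A2 → ℝ) (s1 : A1 → ℝ) :
    IsBR1 u s2 s1 ↔ IsBR2 (flip u) s2 s1 := by
  simp only [IsBR1, IsBR2, EU_flip]

lemma BU2_eq_BU1_flip (u1 u2 : A1 → A2 → ℝ) : BU2 u1 u2 = BU1 (flip u2) (flip u1) := by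
  simp only [BU1, BU2, ← isBR1_iff_isBR2_flip, EU_flip]
  exact congrArg sSup (Set.ext fun _ => exists_comm)

lemma isBR2_pt_of_dominant [DecidableEq A2] {u : A1 → A2 → ℝ} {d : A2}
    (hd : ∀ a b, u a b ≤ u a d) {s1 : A1 → ℝ} (hs1 : IsMixed s1) : IsBR2 u s1 (pt d) := by
  refine ⟨isMixed_pt d, fun t2 ⟨ht2, hsum⟩ => ?_⟩
  calc EU u s1 t2 ≤ ∑ a, ∑ b, s1 a * t2 b * u a d := by
        unfold EU
        gcongr with a _ b _
        · exact mul_nonneg (hs1.1 a) (ht2 b)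
        · exact hd a b
    _ = EU u s1 (pt d) := by
        simp only [EU_pt_right, mul_right_comm _ (t2 _), ← Finset.mul_sum,
          hsum, mul_one]

/-- Against a mixed `s1`, moving weight from `b ≠ d` to `d` gains
`∑ a, s1 a * (u a d - u a b) > 0`, so a best response puts no weight on `b`. -/
lemma IsBR2.eq_pt_of_strictlyDominant [DecidableEq A2] {u : A1 → A2 → ℝ} {d : A2}
    (hd : ∀ a b, b ≠ d → u a b < u a d) {s1 : A1 → ℝ} {s2 : A2 → ℝ} (hs1 : IsMixed s1)
    (hbr : IsBR2 u s1 s2) : s2 = pt d := by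
  obtain ⟨⟨hs2, hsum2⟩, hbest⟩ := hbr
  set gain : A2 → ℝ := fun b => ∑ a, s1 a * (u a d - u a b)
  have gain_pos : ∀ b, b ≠ d → 0 < gain b := by
    intro b hb
    obtain ⟨a, -, ha⟩ : ∃ a ∈ Finset.univ, (0 : A1 → ℝ) a < s1 a :=
      Finset.exists_lt_of_sum_lt (by simp [hs1.2])
    exact Finset.sum_pos' (fun a _ => mul_nonneg (hs1.1 a) (sub_nonneg.2 (hd a b hb).le))
      ⟨a, Finset.mem_univ a, mul_pos ha (sub_pos.2 (hd a b hb))⟩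
  have gain_nonneg : ∀ b, 0 ≤ s2 b * gain b := by
    intro b
    by_cases hb : b = d
    · simp [gain, hb]
    · exact mul_nonneg (hs2 b) (gain_pos b hb).le
  have total_gain : ∑ b, s2 b * gain b = EU u s1 (pt d) - EU u s1 s2 := by
    rw [EU_pt_right, EU]
    calc ∑ b, s2 b * ∑ a, s1 a * (u a d - u a b)
        = ∑ a, ∑ b, (s1 a * u a d * s2 b - s1 a * s2 b * u a b) := by
          rw [Finset.sum_comm]; simp only [Finset.mul_sum]; congr! 2; ring
      _ = _ := by simp only [Finset.sum_sub_distrib, ← Finset.mul_sum, hsum2, mul_one]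
  have no_gain : ∑ b, s2 b * gain b = 0 :=
    le_antisymm (by linarith [hbest _ (isMixed_pt d)]) (Finset.sum_nonneg fun b _ => gain_nonneg b)
  have off_d : ∀ b, b ≠ d → s2 b = 0 := fun b hb =>
    (mul_eq_zero.mp ((Finset.sum_eq_zero_iff_of_nonneg fun b _ => gain_nonneg b).mp no_gain b
      (Finset.mem_univ b))).resolve_right (gain_pos b hb).ne'
  funext b
  by_cases hb : b = d
  · subst hb
    rw [pt, if_pos rfl, ← hsum2, Finset.sum_eq_single b (fun c _ hc => off_d c hc) (by simp)]
  · simp [pt, hb, off_d b hb]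

end

lemma PD.sum_univ (f : PD → ℝ) : ∑ a, f a = f PD.C + f PD.D := by
  rw [show (Finset.univ : Finset PD) = {PD.C, PD.D} from rfl, Finset.sum_pair (by decide)]

lemma pdU2_eq_flip : pdU2 = flip pdU1 := by
  funext a b; cases a <;> cases b <;> rfl

lemma pdU2_defect_strictlyDominant (a b : PD) (hb : b ≠ PD.D) : pdU2 a b < pdU2 a PD.D := by
  cases b
  · cases a <;> norm_num [pdU2]
  · exact absurd rfl hb

lemma BU1_pd : BU1 pdU1 pdU2 = 1 := by
  refine IsGreatest.csSup_eq ⟨⟨pt PD.D, pt PD.D, isMixed_pt PD.D, ?_, ?_⟩, ?_⟩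
  · exact isBR2_pt_of_dominant
      (fun a b => by cases a <;> cases b <;> norm_num [pdU2]) (isMixed_pt PD.D)
  · rw [EU_pt_pt]; rfl
  · rintro _ ⟨s1, s2, hs1, hbr, rfl⟩
    rw [hbr.eq_pt_of_strictlyDominant pdU2_defect_strictlyDominant hs1, EU_pt_right,
      PD.sum_univ]
    have hsum := hs1.2
    rw [PD.sum_univ] at hsum
    norm_num [pdU1]
    linarith [hs1.1 PD.C]

lemma BU2_pd : BU2 pdU1 pdU2 = 1 := by
  rw [BU2_eq_BU1_flip, pdU2_eq_flip, flip_flip, ← pdU2_eq_flip, BU1_pd]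

/-- in Prisoner's Dilemma, a mixed profile is a PCE iff
`min(U_1(s), U_2(s)) ≥ 1`; in particular (C,C) and (D,D) are PCE. -/
theorem pd_pce_iff :
    (∀ s : (PD → ℝ) × (PD → ℝ), IsProfile s →
      (IsPCE pdU1 pdU2 s ↔ 1 ≤ min (EU pdU1 s.1 s.2) (EU pdU2 s.1 s.2))) ∧
    IsPCE pdU1 pdU2 (pt PD.C, pt PD.C) ∧ IsPCE pdU1 pdU2 (pt PD.D, pt PD.D) := by
  have pce_iff : ∀ s : (PD → ℝ) × (PD → ℝ), IsProfile s →
      (IsPCE pdU1 pdU2 s ↔ 1 ≤ min (EU pdU1 s.1 s.2) (EU pdU2 s.1 s.2)) := by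
    intro s hs
    simp only [IsPCE, BU1_pd, BU2_pd, le_min_iff, hs, true_and]
  have pure_pce : ∀ a : PD, IsPCE pdU1 pdU2 (pt a, pt a) := fun a =>
    (pce_iff _ ⟨isMixed_pt a, isMixed_pt a⟩).2 (by
      simp only [EU_pt_pt]; cases a <;> norm_num [pdU1, pdU2])
  exact ⟨pce_iff, pure_pce PD.C, pure_pce PD.D⟩
end

section
/- In the 2×2 coordination game with payoffs (k_1,k_2) at (a,a), (1,1) at (b,b), and (0,0) off-diagonal, where k_1, k_2 > 0: if k_1 > 1 and k_2 > 1 then (a,a) is the unique PCE; if k_1 < 1 and k_2 < 1 then (b,b) is the unique PCE; and if k_1 > 1 and k_2 < 1 then no PCE exists. -/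
open scoped BigOperators

/-- Player 1's payoffs in the coordination game; `true` is action `a`, `false` is `b`. -/
def cU1 (k1 : ℝ) : Bool → Bool → ℝ := fun x y =>
  if x && y then k1 else if !x && !y then 1 else 0

/-- Player 2's payoffs in the coordination game. -/
def cU2 (k2 : ℝ) : Bool → Bool → ℝ := fun x y =>
  if x && y then k2 else if !x && !y then 1 else 0

lemma EU_cU1 (k : ℝ) (s1 s2 : Bool → ℝ) :
    EU (cU1 k) s1 s2 = s1 true * s2 true * k + s1 false * s2 false := by
  simp [EU, cU1, Fintype.sum_bool]

lemma EU_cU2 (k : ℝ) (s1 s2 : Bool → ℝ) :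
    EU (cU2 k) s1 s2 = s1 true * s2 true * k + s1 false * s2 false := by
  simp [EU, cU2, Fintype.sum_bool]

lemma mixed_pt (b : Bool) : IsMixed (pt b) := by
  cases b <;> constructor <;> simp [pt, Fintype.sum_bool]

lemma mixed_facts (s : Bool → ℝ) (h : IsMixed s) :
    0 ≤ s true ∧ s true ≤ 1 ∧ s false = 1 - s true := by
  obtain ⟨hn, hs⟩ := h
  rw [Fintype.sum_bool] at hs
  have := hn true; have := hn false
  refine ⟨by linarith, by linarith, by linarith⟩

lemma pt_true_true : pt true true = (1:ℝ) := by simp [pt]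
lemma pt_true_false : pt true false = (0:ℝ) := by simp [pt]
lemma pt_false_true : pt false true = (0:ℝ) := by simp [pt]
lemma pt_false_false : pt false false = (1:ℝ) := by simp [pt]

lemma br2_pt_true (k : ℝ) (hk : 0 < k) :
    IsBR2 (cU2 k) (pt true) (pt true) := by
  refine ⟨mixed_pt true, fun t2 ht2 => ?_⟩
  obtain ⟨h0, h1, h2⟩ := mixed_facts t2 ht2
  simp only [EU_cU2, pt]; norm_num
  nlinarith

lemma br2_pt_false (k : ℝ) :
    IsBR2 (cU2 k) (pt false) (pt false) := by
  refine ⟨mixed_pt false, fun t2 ht2 => ?_⟩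
  obtain ⟨h0, h1, h2⟩ := mixed_facts t2 ht2
  simp only [EU_cU2, pt]; norm_num
  nlinarith

lemma br1_pt_true (k : ℝ) (hk : 0 < k) :
    IsBR1 (cU1 k) (pt true) (pt true) := by
  refine ⟨mixed_pt true, fun t1 ht1 => ?_⟩
  obtain ⟨h0, h1, h2⟩ := mixed_facts t1 ht1
  simp only [EU_cU1, pt]; norm_num
  nlinarith

lemma br1_pt_false (k : ℝ) :
    IsBR1 (cU1 k) (pt false) (pt false) := by
  refine ⟨mixed_pt false, fun t1 ht1 => ?_⟩
  obtain ⟨h0, h1, h2⟩ := mixed_facts t1 ht1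
  simp only [EU_cU1, pt]; norm_num
  nlinarith

lemma EU_bound (k c : ℝ) (hk : 0 < k) (hc : k ≤ c) (hc1 : 1 ≤ c)
    (s1 s2 : Bool → ℝ) (h1 : IsMixed s1) (h2 : IsMixed s2) :
    s1 true * s2 true * k + s1 false * s2 false ≤ c := by
  obtain ⟨p0, p1, pf⟩ := mixed_facts s1 h1
  obtain ⟨q0, q1, qf⟩ := mixed_facts s2 h2
  rw [pf, qf]
  nlinarith [mul_nonneg p0 q0, mul_nonneg (sub_nonneg.2 p1) (sub_nonneg.2 q1),
    mul_nonneg p0 (sub_nonneg.2 q1), mul_nonneg (sub_nonneg.2 p1) q0]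

lemma BU1_eq (k1 k2 : ℝ) (h1 : 0 < k1) (h2 : 0 < k2) :
    BU1 (cU1 k1) (cU2 k2) = max k1 1 := by
  have hub : ∀ x ∈ {x | ∃ s1 s2, IsMixed s1 ∧ IsBR2 (cU2 k2) s1 s2 ∧ x = EU (cU1 k1) s1 s2},
      x ≤ max k1 1 := by
    rintro x ⟨s1, s2, hs1, ⟨hs2, -⟩, rfl⟩
    rw [EU_cU1]
    exact EU_bound k1 _ h1 (le_max_left _ _) (le_max_right _ _) s1 s2 hs1 hs2
  have hmem : max k1 1 ∈ {x | ∃ s1 s2, IsMixed s1 ∧ IsBR2 (cU2 k2) s1 s2 ∧ x = EU (cU1 k1) s1 s2} := by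
    rcases le_total 1 k1 with h | h
    · exact ⟨pt true, pt true, mixed_pt true, br2_pt_true k2 h2, by
        simp [EU_cU1, pt, max_eq_left h]⟩
    · exact ⟨pt false, pt false, mixed_pt false, br2_pt_false k2, by
        simp [EU_cU1, pt, max_eq_right h]⟩
  exact le_antisymm (csSup_le ⟨_, hmem⟩ hub) (le_csSup ⟨_, hub⟩ hmem)

lemma BU2_eq (k1 k2 : ℝ) (h1 : 0 < k1) (h2 : 0 < k2) :
    BU2 (cU1 k1) (cU2 k2) = max k2 1 := by
  have hub : ∀ x ∈ {x | ∃ s1 s2, IsMixed s2 ∧ IsBR1 (cU1 k1) s2 s1 ∧ x = EU (cU2 k2) s1 s2},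
      x ≤ max k2 1 := by
    rintro x ⟨s1, s2, hs2, ⟨hs1, -⟩, rfl⟩
    rw [EU_cU2]
    exact EU_bound k2 _ h2 (le_max_left _ _) (le_max_right _ _) s1 s2 hs1 hs2
  have hmem : max k2 1 ∈ {x | ∃ s1 s2, IsMixed s2 ∧ IsBR1 (cU1 k1) s2 s1 ∧ x = EU (cU2 k2) s1 s2} := by
    rcases le_total 1 k2 with h | h
    · exact ⟨pt true, pt true, mixed_pt true, br1_pt_true k1 h1, by
        simp [EU_cU2, pt, max_eq_left h]⟩
    · exact ⟨pt false, pt false, mixed_pt false, br1_pt_false k1, by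
        simp [EU_cU2, pt, max_eq_right h]⟩
  exact le_antisymm (csSup_le ⟨_, hmem⟩ hub) (le_csSup ⟨_, hub⟩ hmem)

lemma force_one (k p q : ℝ) (hk : 1 < k) (hp0 : 0 ≤ p) (hp1 : p ≤ 1)
    (hq0 : 0 ≤ q) (hq1 : q ≤ 1) (h : k ≤ p * q * k + (1 - p) * (1 - q)) :
    p = 1 ∧ q = 1 := by
  have hpq : 1 ≤ p * q := by
    nlinarith [mul_nonneg hp0 (sub_nonneg.2 hq1), mul_nonneg hq0 (sub_nonneg.2 hp1)]
  have hp : 1 ≤ p := by nlinarith [mul_nonneg hp0 (sub_nonneg.2 hq1)]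
  have hq : 1 ≤ q := by nlinarith [mul_nonneg hq0 (sub_nonneg.2 hp1)]
  exact ⟨le_antisymm hp1 hp, le_antisymm hq1 hq⟩

lemma force_zero (k p q : ℝ) (hk0 : 0 < k) (hk : k < 1) (hp0 : 0 ≤ p) (hp1 : p ≤ 1)
    (hq0 : 0 ≤ q) (hq1 : q ≤ 1) (h : 1 ≤ p * q * k + (1 - p) * (1 - q)) :
    p = 0 ∧ q = 0 := by
  have hpq : p * q ≤ 0 := by
    nlinarith [mul_nonneg hp0 (sub_nonneg.2 hq1), mul_nonneg hq0 (sub_nonneg.2 hp1)]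
  have hpq0 : p * q = 0 := le_antisymm hpq (mul_nonneg hp0 hq0)
  have hp : p ≤ 0 := by nlinarith [mul_nonneg (sub_nonneg.2 hp1) hq0]
  have hq : q ≤ 0 := by nlinarith [mul_nonneg (sub_nonneg.2 hq1) hp0]
  exact ⟨le_antisymm hp hp0, le_antisymm hq hq0⟩

/-- PCE of the 2×2 coordination game. -/
theorem coordination_pce (k1 k2 : ℝ) (h1 : 0 < k1) (h2 : 0 < k2) :
    (1 < k1 → 1 < k2 →
      IsPCE (cU1 k1) (cU2 k2) (pt true, pt true) ∧
      ∀ s, IsPCE (cU1 k1) (cU2 k2) s → s = (pt true, pt true)) ∧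
    (k1 < 1 → k2 < 1 →
      IsPCE (cU1 k1) (cU2 k2) (pt false, pt false) ∧
      ∀ s, IsPCE (cU1 k1) (cU2 k2) s → s = (pt false, pt false)) ∧
    (1 < k1 → k2 < 1 → ¬∃ s, IsPCE (cU1 k1) (cU2 k2) s) := by
  have hB1 := BU1_eq k1 k2 h1 h2
  have hB2 := BU2_eq k1 k2 h1 h2
  refine ⟨fun ha hb => ?_, fun ha hb => ?_, fun ha hb => ?_⟩
  · constructor
    · refine ⟨⟨mixed_pt true, mixed_pt true⟩, ?_, ?_⟩
      · rw [hB1, max_eq_left ha.le]; simp [EU_cU1, pt]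
      · rw [hB2, max_eq_left hb.le]; simp [EU_cU2, pt]
    · rintro ⟨s1, s2⟩ ⟨⟨hs1, hs2⟩, hu1, hu2⟩
      rw [hB1, EU_cU1, max_eq_left ha.le] at hu1
      dsimp only at hu1
      obtain ⟨p0, p1, pf⟩ := mixed_facts s1 hs1
      obtain ⟨q0, q1, qf⟩ := mixed_facts s2 hs2
      rw [pf, qf] at hu1
      obtain ⟨hp, hq⟩ := force_one k1 _ _ ha p0 p1 q0 q1 hu1
      simp only [Prod.mk.injEq]
      constructor <;> funext b <;> cases b <;> simp [pt] <;> linarith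
  · constructor
    · refine ⟨⟨mixed_pt false, mixed_pt false⟩, ?_, ?_⟩
      · rw [hB1, max_eq_right ha.le]; simp [EU_cU1, pt]
      · rw [hB2, max_eq_right hb.le]; simp [EU_cU2, pt]
    · rintro ⟨s1, s2⟩ ⟨⟨hs1, hs2⟩, hu1, hu2⟩
      rw [hB1, EU_cU1, max_eq_right ha.le] at hu1
      dsimp only at hu1
      obtain ⟨p0, p1, pf⟩ := mixed_facts s1 hs1
      obtain ⟨q0, q1, qf⟩ := mixed_facts s2 hs2
      rw [pf, qf] at hu1
      obtain ⟨hp, hq⟩ := force_zero k1 _ _ h1 ha p0 p1 q0 q1 hu1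
      simp only [Prod.mk.injEq]
      constructor <;> funext b <;> cases b <;> simp [pt] <;> linarith
  · rintro ⟨⟨s1, s2⟩, ⟨⟨hs1, hs2⟩, hu1, hu2⟩⟩
    rw [hB1, EU_cU1, max_eq_left ha.le] at hu1
    rw [hB2, EU_cU2, max_eq_right hb.le] at hu2
    dsimp only at hu1 hu2
    obtain ⟨p0, p1, pf⟩ := mixed_facts s1 hs1
    obtain ⟨q0, q1, qf⟩ := mixed_facts s2 hs2
    rw [pf, qf] at hu1 hu2
    obtain ⟨hp, hq⟩ := force_one k1 _ _ ha p0 p1 q0 q1 hu1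
    rw [hp, hq] at hu2
    norm_num at hu2
    linarith
end

section
/- For any 2-player game G and its extension G* with side payments, MSW(G*) = MSW(G) and mm_i(G*) = mm_i(G) for i = 1,2. -/
open scoped BigOperators Classical

section FGameDefs

/-- A mixed strategy (finitely supported) over a possibly infinite action set. -/
def IsMixedF {A : Type} (s : A →₀ ℝ) : Prop :=
  (∀ a, 0 ≤ s a) ∧ s.sum (fun _ x => x) = 1

/-- Expected utility under finitely-supported mixed strategies. -/
noncomputable def EUF {A B : Type} (u : A → B → ℝ) (s1 : A →₀ ℝ) (s2 : B →₀ ℝ) : ℝ :=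
  s1.sum fun a p => s2.sum fun b q => p * q * u a b

/-- `s2` is a best response of player 2 (utility `u2`) to `s1`. -/
def IsBR2F {A B : Type} (u2 : A → B → ℝ) (s1 : A →₀ ℝ) (s2 : B →₀ ℝ) : Prop :=
  IsMixedF s2 ∧ ∀ t2, IsMixedF t2 → EUF u2 s1 t2 ≤ EUF u2 s1 s2

/-- `s1` is a best response of player 1 (utility `u1`) to `s2`. -/
def IsBR1F {A B : Type} (u1 : A → B → ℝ) (s2 : B →₀ ℝ) (s1 : A →₀ ℝ) : Prop :=
  IsMixedF s1 ∧ ∀ t1, IsMixedF t1 → EUF u1 t1 s2 ≤ EUF u1 s1 s2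

/-- Best utility for player 1 when player 2 best responds. -/
noncomputable def BU1F {A B : Type} (u1 u2 : A → B → ℝ) : ℝ :=
  sSup {x | ∃ s1 s2, IsMixedF s1 ∧ IsBR2F u2 s1 s2 ∧ x = EUF u1 s1 s2}

/-- Best utility for player 2 when player 1 best responds. -/
noncomputable def BU2F {A B : Type} (u1 u2 : A → B → ℝ) : ℝ :=
  sSup {x | ∃ s1 s2, IsMixedF s2 ∧ IsBR1F u1 s2 s1 ∧ x = EUF u2 s1 s2}

/-- α-PCE in the finitely-supported setting. -/
def IsAlphaPCEF {A B : Type} (u1 u2 : A → B → ℝ) (α : ℝ) (s : (A →₀ ℝ) × (B →₀ ℝ)) : Prop :=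
  IsMixedF s.1 ∧ IsMixedF s.2 ∧
    α + BU1F u1 u2 ≤ EUF u1 s.1 s.2 ∧ α + BU2F u1 u2 ≤ EUF u2 s.1 s.2

/-- Max-PCE in the finitely-supported setting. -/
def IsMPCEF {A B : Type} (u1 u2 : A → B → ℝ) (s : (A →₀ ℝ) × (B →₀ ℝ)) : Prop :=
  ∃ α, IsAlphaPCEF u1 u2 α s ∧ ∀ α' s', IsAlphaPCEF u1 u2 α' s' → α' ≤ α

/-- Maximum social welfare over pure action profiles. -/
noncomputable def MSWF {A B : Type} (u1 u2 : A → B → ℝ) : ℝ :=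
  sSup {x | ∃ a b, x = u1 a b + u2 a b}

/-- Player 1's minimax value. -/
noncomputable def mm1F {A B : Type} (u : A → B → ℝ) : ℝ :=
  sInf {x | ∃ s2, IsMixedF s2 ∧ x = sSup {y | ∃ s1, IsMixedF s1 ∧ y = EUF u s1 s2}}

/-- Player 2's minimax value. -/
noncomputable def mm2F {A B : Type} (u : A → B → ℝ) : ℝ :=
  sInf {x | ∃ s1, IsMixedF s1 ∧ x = sSup {y | ∃ s2, IsMixedF s2 ∧ y = EUF u s1 s2}}

/-- Actions of the side-payment extension: original actions plus deal actions
`(a, r, backup)` proposing action profile `a` with transfer `r` from player 1 to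
player 2, and backup action if the deal is not matched. -/
def SPAct (A1 A2 Ai : Type) : Type := Ai ⊕ (A1 × A2) × ℝ × Ai

/-- Player 1's utility in the side-payment extension. -/
noncomputable def uStar1 {A1 A2 : Type} (u1 : A1 → A2 → ℝ) :
    SPAct A1 A2 A1 → SPAct A1 A2 A2 → ℝ
  | Sum.inl b1, Sum.inl b2 => u1 b1 b2
  | Sum.inl b1, Sum.inr (_, _, b2) => u1 b1 b2
  | Sum.inr (_, _, b1), Sum.inl b2 => u1 b1 b2
  | Sum.inr (d1, r1, b1), Sum.inr (d2, r2, b2) =>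
      if d1 = d2 ∧ r1 = r2 then u1 d1.1 d1.2 - r1 else u1 b1 b2

/-- Player 2's utility in the side-payment extension. -/
noncomputable def uStar2 {A1 A2 : Type} (u2 : A1 → A2 → ℝ) :
    SPAct A1 A2 A1 → SPAct A1 A2 A2 → ℝ
  | Sum.inl b1, Sum.inl b2 => u2 b1 b2
  | Sum.inl b1, Sum.inr (_, _, b2) => u2 b1 b2
  | Sum.inr (_, _, b1), Sum.inl b2 => u2 b1 b2
  | Sum.inr (d1, r1, b1), Sum.inr (d2, r2, b2) =>
      if d1 = d2 ∧ r1 = r2 then u2 d1.1 d1.2 + r1 else u2 b1 b2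

end FGameDefs

section SidePaymentHelpers

lemma isMixedF_single {A : Type} (a : A) : IsMixedF (Finsupp.single a (1:ℝ)) := by
  constructor
  · intro a'; rw [Finsupp.single_apply]; split <;> norm_num
  · simp [Finsupp.sum_single_index]

lemma isMixedF_mapDomain {A X : Type} (f : A → X) {s : A →₀ ℝ} (hs : IsMixedF s) :
    IsMixedF (Finsupp.mapDomain f s) := by
  constructor
  · intro x
    rw [Finsupp.mapDomain, Finsupp.sum_apply]
    simp only [Finsupp.sum]
    apply Finset.sum_nonneg
    intro a _; rw [Finsupp.single_apply]; split
    · exact hs.1 a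
    · exact le_refl _
  · rw [Finsupp.sum_mapDomain_index (by simp) (by intros; rfl)]
    exact hs.2

lemma EUF_mapDomain_left {A B X : Type} (u : X → B → ℝ) (f : A → X)
    (s1 : A →₀ ℝ) (s2 : B →₀ ℝ) :
    EUF u (Finsupp.mapDomain f s1) s2 = EUF (fun a b => u (f a) b) s1 s2 := by
  unfold EUF
  exact Finsupp.sum_mapDomain_index (by simp) (by intro b m1 m2; rw [← Finsupp.sum_add]; congr 1; ext b' q; ring)

lemma EUF_mapDomain_right {A B Y : Type} (u : A → Y → ℝ) (g : B → Y)
    (s1 : A →₀ ℝ) (s2 : B →₀ ℝ) :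
    EUF u s1 (Finsupp.mapDomain g s2) = EUF (fun a b => u a (g b)) s1 s2 := by
  unfold EUF
  apply Finsupp.sum_congr
  intro a _
  exact Finsupp.sum_mapDomain_index (by simp) (by intros; ring)

lemma EUF_swap {A B : Type} (u : A → B → ℝ) (s1 : A →₀ ℝ) (s2 : B →₀ ℝ) :
    EUF u s1 s2 = EUF (Function.swap u) s2 s1 := by
  unfold EUF
  simp only [Finsupp.sum]
  rw [Finset.sum_comm]
  exact Finset.sum_congr rfl fun b _ => Finset.sum_congr rfl fun a _ => by
    show s1 a * s2 b * u a b = s2 b * s1 a * u a b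
    ring

lemma EUF_le_right {A B : Type} {u : A → B → ℝ} {g : B → ℝ}
    (h : ∀ a b, u a b ≤ g b) {s1 : A →₀ ℝ} {s2 : B →₀ ℝ}
    (h1 : IsMixedF s1) (h2 : IsMixedF s2) :
    EUF u s1 s2 ≤ s2.sum fun b q => q * g b := by
  have hs1 : ∑ a ∈ s1.support, s1 a = 1 := h1.2
  unfold EUF
  simp only [Finsupp.sum]
  calc ∑ a ∈ s1.support, ∑ b ∈ s2.support, s1 a * s2 b * u a b
      ≤ ∑ a ∈ s1.support, ∑ b ∈ s2.support, s1 a * (s2 b * g b) := by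
        apply Finset.sum_le_sum; intro a _
        apply Finset.sum_le_sum; intro b _
        rw [mul_assoc]
        exact mul_le_mul_of_nonneg_left
          (mul_le_mul_of_nonneg_left (h a b) (h2.1 b)) (h1.1 a)
    _ = ∑ a ∈ s1.support, s1 a * ∑ b ∈ s2.support, s2 b * g b := by
        simp [Finset.mul_sum]
    _ = (∑ a ∈ s1.support, s1 a) * ∑ b ∈ s2.support, s2 b * g b := by
        rw [Finset.sum_mul]
    _ = ∑ b ∈ s2.support, s2 b * g b := by rw [hs1, one_mul]

lemma const_le_EUF {A B : Type} {u : A → B → ℝ} {m : ℝ}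
    (h : ∀ a b, m ≤ u a b) {s1 : A →₀ ℝ} {s2 : B →₀ ℝ}
    (h1 : IsMixedF s1) (h2 : IsMixedF s2) :
    m ≤ EUF u s1 s2 := by
  have hs1 : ∑ a ∈ s1.support, s1 a = 1 := h1.2
  have hs2 : ∑ b ∈ s2.support, s2 b = 1 := h2.2
  unfold EUF
  simp only [Finsupp.sum]
  calc m = (∑ a ∈ s1.support, s1 a) * ((∑ b ∈ s2.support, s2 b) * m) := by
        rw [hs1, hs2]; ring
    _ = ∑ a ∈ s1.support, ∑ b ∈ s2.support, s1 a * s2 b * m := by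
        rw [Finset.sum_mul]
        apply Finset.sum_congr rfl; intro a _
        rw [Finset.sum_mul, Finset.mul_sum]
        apply Finset.sum_congr rfl; intro b _; ring
    _ ≤ ∑ a ∈ s1.support, ∑ b ∈ s2.support, s1 a * s2 b * u a b := by
        apply Finset.sum_le_sum; intro a _
        apply Finset.sum_le_sum; intro b _
        exact mul_le_mul_of_nonneg_left (h a b) (mul_nonneg (h1.1 a) (h2.1 b))

lemma mm2F_eq_mm1F_swap {A B : Type} (u : A → B → ℝ) :
    mm2F u = mm1F (Function.swap u) := by
  unfold mm1F mm2F
  simp only [EUF_swap u]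

lemma mm1F_congr {X Y A B : Type} [Nonempty A] [Nonempty B]
    (U : X → Y → ℝ) (u : A → B → ℝ)
    (e1 : A → X) (e2 : B → Y) (p1 : X → A) (p2 : Y → B)
    (hc1 : ∀ x b, U x (e2 b) = u (p1 x) b)
    (hc2 : ∀ a y, U (e1 a) y = u a (p2 y))
    (hc3 : ∀ a, p1 (e1 a) = a)
    (g : Y → ℝ) (hg : ∀ x y, U x y ≤ g y)
    (m : ℝ) (hm : ∀ a b, m ≤ u a b) :
    mm1F U = mm1F u := by
  classical
  obtain ⟨a0⟩ := ‹Nonempty A›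
  obtain ⟨b0⟩ := ‹Nonempty B›
  set TU : (Y →₀ ℝ) → Set ℝ :=
    fun t => {y | ∃ s1, IsMixedF s1 ∧ y = EUF U s1 t} with hTU
  set Tu : (B →₀ ℝ) → Set ℝ :=
    fun t => {y | ∃ s1, IsMixedF s1 ∧ y = EUF u s1 t} with hTu
  -- basic facts
  have hub : ∀ a b, u a b ≤ g (e2 b) := by
    intro a b
    have := hg (e1 a) (e2 b)
    rwa [hc1, hc3] at this
  have hTu_ne : ∀ t : B →₀ ℝ, (Tu t).Nonempty :=
    fun t => ⟨EUF u (Finsupp.single a0 1) t, Finsupp.single a0 1, isMixedF_single a0, rfl⟩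
  have hTU_ne : ∀ t : Y →₀ ℝ, (TU t).Nonempty :=
    fun t => ⟨EUF U (Finsupp.single (e1 a0) 1) t, Finsupp.single (e1 a0) 1,
      isMixedF_single _, rfl⟩
  have bddU : ∀ t : Y →₀ ℝ, IsMixedF t → BddAbove (TU t) := by
    intro t ht
    refine ⟨t.sum fun y q => q * g y, ?_⟩
    rintro z ⟨s1, hs1, rfl⟩
    exact EUF_le_right (fun x y => hg x y) hs1 ht
  have bddu : ∀ t : B →₀ ℝ, IsMixedF t → BddAbove (Tu t) := by
    intro t ht
    refine ⟨t.sum fun b q => q * g (e2 b), ?_⟩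
    rintro z ⟨s1, hs1, rfl⟩
    exact EUF_le_right hub hs1 ht
  -- transport along e2
  have key1 : ∀ t : B →₀ ℝ, IsMixedF t →
      sSup (TU (Finsupp.mapDomain e2 t)) = sSup (Tu t) := by
    intro t ht
    apply congrArg sSup
    ext z
    constructor
    · rintro ⟨s1, hs1, rfl⟩
      refine ⟨Finsupp.mapDomain p1 s1, isMixedF_mapDomain p1 hs1, ?_⟩
      rw [EUF_mapDomain_right, EUF_mapDomain_left]
      simp only [hc1]
    · rintro ⟨s1, hs1, rfl⟩
      refine ⟨Finsupp.mapDomain e1 s1, isMixedF_mapDomain e1 hs1, ?_⟩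
      rw [EUF_mapDomain_left, EUF_mapDomain_right]
      simp only [hc1, hc3]
  -- domination for arbitrary t*
  have key2 : ∀ t : Y →₀ ℝ, IsMixedF t →
      sSup (Tu (Finsupp.mapDomain p2 t)) ≤ sSup (TU t) := by
    intro t ht
    apply csSup_le_csSup (bddU t ht) (hTu_ne _)
    rintro z ⟨s1, hs1, rfl⟩
    refine ⟨Finsupp.mapDomain e1 s1, isMixedF_mapDomain e1 hs1, ?_⟩
    rw [EUF_mapDomain_right, EUF_mapDomain_left]
    simp only [hc2]
  -- the outer sets
  set SU : Set ℝ := {x | ∃ t, IsMixedF t ∧ x = sSup (TU t)} with hSU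
  set Su : Set ℝ := {x | ∃ t, IsMixedF t ∧ x = sSup (Tu t)} with hSu
  have hsub : Su ⊆ SU := by
    rintro x ⟨t, ht, rfl⟩
    exact ⟨Finsupp.mapDomain e2 t, isMixedF_mapDomain e2 ht, (key1 t ht).symm⟩
  have hlow_u : ∀ x ∈ Su, m ≤ x := by
    rintro x ⟨t, ht, rfl⟩
    refine le_trans (const_le_EUF hm (isMixedF_single a0) ht) ?_
    exact le_csSup (bddu t ht) ⟨Finsupp.single a0 1, isMixedF_single a0, rfl⟩
  have hlow_U : ∀ x ∈ SU, m ≤ x := by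
    rintro x ⟨t, ht, rfl⟩
    refine le_trans ?_ (key2 t ht)
    exact hlow_u _ ⟨Finsupp.mapDomain p2 t, isMixedF_mapDomain p2 ht, rfl⟩
  have hSu_ne : Su.Nonempty :=
    ⟨sSup (Tu (Finsupp.single b0 1)), Finsupp.single b0 1, isMixedF_single b0, rfl⟩
  have hSU_ne : SU.Nonempty :=
    ⟨sSup (TU (Finsupp.single (e2 b0) 1)), Finsupp.single (e2 b0) 1, isMixedF_single _, rfl⟩
  have goal1 : mm1F U = sInf SU := rfl
  have goal2 : mm1F u = sInf Su := rfl
  rw [goal1, goal2]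
  apply le_antisymm
  · exact csInf_le_csInf ⟨m, hlow_U⟩ hSu_ne hsub
  · apply le_csInf hSU_ne
    rintro x ⟨t, ht, rfl⟩
    refine le_trans ?_ (key2 t ht)
    exact csInf_le ⟨m, hlow_u⟩ ⟨Finsupp.mapDomain p2 t, isMixedF_mapDomain p2 ht, rfl⟩


end SidePaymentHelpers

/-- the side-payment extension `G*` has the same maximum social
welfare and the same minimax values as `G`. -/
theorem sidePayment_msw_mm {A1 A2 : Type} [Fintype A1] [Fintype A2]
    [Nonempty A1] [Nonempty A2] (u1 u2 : A1 → A2 → ℝ) :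
    MSWF (uStar1 u1) (uStar2 u2) = MSWF u1 u2 ∧
    mm1F (uStar1 u1) = mm1F u1 ∧
    mm2F (uStar2 u2) = mm2F u2 := by
  obtain ⟨M1, hM1⟩ := Finite.exists_le (fun p : A1 × A2 => u1 p.1 p.2)
  obtain ⟨M2, hM2⟩ := Finite.exists_le (fun p : A1 × A2 => u2 p.1 p.2)
  obtain ⟨m1', hm1'⟩ := Finite.exists_le (fun p : A1 × A2 => -u1 p.1 p.2)
  obtain ⟨m2', hm2'⟩ := Finite.exists_le (fun p : A1 × A2 => -u2 p.1 p.2)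
  refine ⟨?_, ?_, ?_⟩
  · -- MSW
    unfold MSWF
    apply congrArg sSup
    ext x
    simp only [Set.mem_setOf_eq]
    constructor
    · rintro ⟨a, b, rfl⟩
      rcases a with b1 | ⟨d1, r1, bk1⟩ <;> rcases b with b2 | ⟨d2, r2, bk2⟩
      · exact ⟨b1, b2, rfl⟩
      · exact ⟨b1, bk2, rfl⟩
      · exact ⟨bk1, b2, rfl⟩
      · simp only [uStar1, uStar2]
        split_ifs with h
        · exact ⟨d1.1, d1.2, by ring⟩
        · exact ⟨bk1, bk2, rfl⟩
    · rintro ⟨a, b, rfl⟩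
      exact ⟨Sum.inl a, Sum.inl b, rfl⟩
  · -- mm1
    refine mm1F_congr (uStar1 u1) u1 Sum.inl Sum.inl
      (fun x => match x with | Sum.inl b => b | Sum.inr (_, _, b) => b)
      (fun y => match y with | Sum.inl b => b | Sum.inr (_, _, b) => b)
      ?_ ?_ (fun a => rfl)
      (fun y => match y with
        | Sum.inl _ => M1
        | Sum.inr (d, r, _) => max M1 (u1 d.1 d.2 - r)) ?_
      (-m1') ?_
    · rintro (b1 | ⟨d1, r1, bk1⟩) b <;> rfl
    · rintro a (b2 | ⟨d2, r2, bk2⟩) <;> rfl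
    · rintro (b1 | ⟨d1, r1, bk1⟩) (b2 | ⟨d2, r2, bk2⟩)
      · exact hM1 (b1, b2)
      · exact le_max_of_le_left (hM1 (b1, bk2))
      · exact hM1 (bk1, b2)
      · show (if d1 = d2 ∧ r1 = r2 then u1 d1.1 d1.2 - r1 else u1 bk1 bk2) ≤ _
        split_ifs with h
        · rw [h.1, h.2]; exact le_max_right _ _
        · exact le_max_of_le_left (hM1 (bk1, bk2))
    · intro a b
      have := hm1' (a, b)
      simpa using by linarith [hm1' (a, b)]
  · -- mm2
    rw [mm2F_eq_mm1F_swap, mm2F_eq_mm1F_swap]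
    refine mm1F_congr (Function.swap (uStar2 u2)) (Function.swap u2) Sum.inl Sum.inl
      (fun x => match x with | Sum.inl b => b | Sum.inr (_, _, b) => b)
      (fun y => match y with | Sum.inl b => b | Sum.inr (_, _, b) => b)
      ?_ ?_ (fun a => rfl)
      (fun y => match y with
        | Sum.inl _ => M2
        | Sum.inr (d, r, _) => max M2 (u2 d.1 d.2 + r)) ?_
      (-m2') ?_
    · rintro (b1 | ⟨d1, r1, bk1⟩) b <;> rfl
    · rintro a (b2 | ⟨d2, r2, bk2⟩) <;> rfl
    · rintro (b1 | ⟨d1, r1, bk1⟩) (b2 | ⟨d2, r2, bk2⟩)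
      · exact hM2 (b2, b1)
      · exact le_max_of_le_left (hM2 (bk2, b1))
      · exact hM2 (b2, bk1)
      · show (if d2 = d1 ∧ r2 = r1 then u2 d2.1 d2.2 + r2 else u2 bk2 bk1) ≤ _
        split_ifs with h
        · exact le_max_right _ _
        · exact le_max_of_le_left (hM2 (bk2, bk1))
    · intro a b
      simpa using by linarith [hm2' (b, a)]
end

section
/- The M-PCE value is the unique function f mapping 2-player games with side payments to ℝ² satisfying: (1) maximum social welfare: f_1(G*) + f_2(G*) = MSW(G); (2) shift invariance: f((G^c)*) = f(G*) + c for all c ∈ ℝ²; and (3) minimax dominance: if mm_i(G) ≥ mm_j(G) then f_i(G*) ≥ f_j(G*). -/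
open scoped BigOperators

section Values

variable {A1 A2 : Type} [Fintype A1] [Fintype A2]

/-- Player 1's minimax value: player 2 minimizes player 1's maximum payoff. -/
noncomputable def mm1 (u : A1 → A2 → ℝ) : ℝ :=
  sInf {x | ∃ s2, IsMixed s2 ∧ x = sSup {y | ∃ s1, IsMixed s1 ∧ y = EU u s1 s2}}

/-- Player 2's minimax value: player 1 minimizes player 2's maximum payoff. -/
noncomputable def mm2 (u : A1 → A2 → ℝ) : ℝ :=
  sInf {x | ∃ s1, IsMixed s1 ∧ x = sSup {y | ∃ s2, IsMixed s2 ∧ y = EU u s1 s2}}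

/-- Maximum social welfare over pure action profiles. -/
noncomputable def MSW (u1 u2 : A1 → A2 → ℝ) : ℝ :=
  sSup {x | ∃ a1 a2, x = u1 a1 a2 + u2 a1 a2}

end Values

/-- The M-PCE value of the side-payment extension of a game, as a function of the
underlying game. -/
noncomputable def MPCEval {A1 A2 : Type} [Fintype A1] [Fintype A2]
    (u1 u2 : A1 → A2 → ℝ) : ℝ × ℝ :=
  ((MSW u1 u2 + mm1 u1 - mm2 u2) / 2, (MSW u1 u2 - mm1 u1 + mm2 u2) / 2)

/-- A value function satisfies the three axioms: maximum social welfare, shift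
invariance, and minimax dominance. -/
def SatisfiesAxioms {A1 A2 : Type} [Fintype A1] [Fintype A2]
    (f : (A1 → A2 → ℝ) → (A1 → A2 → ℝ) → ℝ × ℝ) : Prop :=
  (∀ u1 u2, (f u1 u2).1 + (f u1 u2).2 = MSW u1 u2) ∧
  (∀ u1 u2 (c1 c2 : ℝ),
    f (fun a b => u1 a b + c1) (fun a b => u2 a b + c2) =
      ((f u1 u2).1 + c1, (f u1 u2).2 + c2)) ∧
  (∀ u1 u2, (mm2 u2 ≤ mm1 u1 → (f u1 u2).2 ≤ (f u1 u2).1) ∧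
            (mm1 u1 ≤ mm2 u2 → (f u1 u2).1 ≤ (f u1 u2).2))

section Aux

lemma aux_sSup_add_const (S : Set ℝ) (hne : S.Nonempty) (hb : BddAbove S) (c : ℝ) :
    sSup ((fun x => x + c) '' S) = sSup S + c :=
  ((OrderIso.addRight c).map_csSup' hne hb).symm

lemma aux_sInf_add_const (S : Set ℝ) (hne : S.Nonempty) (hb : BddBelow S) (c : ℝ) :
    sInf ((fun x => x + c) '' S) = sInf S + c :=
  ((OrderIso.addRight c).map_csInf' hne hb).symm

variable {A1 A2 : Type} [Fintype A1] [Fintype A2]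

open Classical in
/-- The pure strategy at `a0`, as a mixed strategy. -/
noncomputable def pureStrat {A : Type} [Fintype A] (a0 : A) : A → ℝ :=
  fun a => if a = a0 then 1 else 0

lemma pureStrat_mixed {A : Type} [Fintype A] (a0 : A) : IsMixed (pureStrat a0) := by
  classical
  constructor
  · intro a
    simp only [pureStrat]
    split <;> norm_num
  · simp [pureStrat]

lemma aux_sum_weight {s1 : A1 → ℝ} {s2 : A2 → ℝ} (h1 : IsMixed s1) (h2 : IsMixed s2)
    (C : ℝ) : ∑ a1, ∑ a2, s1 a1 * s2 a2 * C = C := by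
  simp_rw [mul_assoc, ← Finset.sum_mul_sum, h1.2, one_mul, ← Finset.sum_mul, h2.2, one_mul]

lemma EU_add_const (u : A1 → A2 → ℝ) (c : ℝ) {s1 : A1 → ℝ} {s2 : A2 → ℝ}
    (h1 : IsMixed s1) (h2 : IsMixed s2) :
    EU (fun a b => u a b + c) s1 s2 = EU u s1 s2 + c := by
  unfold EU
  have h : ∀ a1 a2, s1 a1 * s2 a2 * (u a1 a2 + c)
      = s1 a1 * s2 a2 * u a1 a2 + s1 a1 * s2 a2 * c := by
    intro a1 a2; ring
  simp_rw [h, Finset.sum_add_distrib]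
  rw [aux_sum_weight h1 h2]

variable [Nonempty A1] [Nonempty A2]

/-- Upper bound on expected utility. -/
noncomputable def Mbd (u : A1 → A2 → ℝ) : ℝ :=
  Finset.univ.sup' Finset.univ_nonempty (fun p : A1 × A2 => u p.1 p.2)

/-- Lower bound on expected utility. -/
noncomputable def mbd (u : A1 → A2 → ℝ) : ℝ :=
  Finset.univ.inf' Finset.univ_nonempty (fun p : A1 × A2 => u p.1 p.2)

lemma EU_le_Mbd (u : A1 → A2 → ℝ) {s1 : A1 → ℝ} {s2 : A2 → ℝ}
    (h1 : IsMixed s1) (h2 : IsMixed s2) : EU u s1 s2 ≤ Mbd u := by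
  have : EU u s1 s2 ≤ ∑ a1, ∑ a2, s1 a1 * s2 a2 * Mbd u := by
    apply Finset.sum_le_sum
    intro a1 _
    apply Finset.sum_le_sum
    intro a2 _
    exact mul_le_mul_of_nonneg_left
      (Finset.le_sup' (f := fun p : A1 × A2 => u p.1 p.2) (Finset.mem_univ (a1, a2)))
      (mul_nonneg (h1.1 a1) (h2.1 a2))
  rwa [aux_sum_weight h1 h2] at this

lemma mbd_le_EU (u : A1 → A2 → ℝ) {s1 : A1 → ℝ} {s2 : A2 → ℝ}
    (h1 : IsMixed s1) (h2 : IsMixed s2) : mbd u ≤ EU u s1 s2 := by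
  have : ∑ a1, ∑ a2, s1 a1 * s2 a2 * mbd u ≤ EU u s1 s2 := by
    apply Finset.sum_le_sum
    intro a1 _
    apply Finset.sum_le_sum
    intro a2 _
    exact mul_le_mul_of_nonneg_left
      (Finset.inf'_le (fun p : A1 × A2 => u p.1 p.2) (Finset.mem_univ (a1, a2)))
      (mul_nonneg (h1.1 a1) (h2.1 a2))
  rwa [aux_sum_weight h1 h2] at this

/-- The inner set of `mm1`. -/
lemma mm1_inner_ne (u : A1 → A2 → ℝ) (s2 : A2 → ℝ) :
    {y | ∃ s1, IsMixed s1 ∧ y = EU u s1 s2}.Nonempty :=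
  ⟨EU u (pureStrat (Classical.arbitrary A1)) s2,
    pureStrat (Classical.arbitrary A1), pureStrat_mixed _, rfl⟩

lemma mm1_inner_bdd (u : A1 → A2 → ℝ) {s2 : A2 → ℝ} (h2 : IsMixed s2) :
    BddAbove {y | ∃ s1, IsMixed s1 ∧ y = EU u s1 s2} := by
  refine ⟨Mbd u, ?_⟩
  rintro y ⟨s1, hs1, rfl⟩
  exact EU_le_Mbd u hs1 h2

lemma mm2_inner_ne (u : A1 → A2 → ℝ) (s1 : A1 → ℝ) :
    {y | ∃ s2, IsMixed s2 ∧ y = EU u s1 s2}.Nonempty :=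
  ⟨EU u s1 (pureStrat (Classical.arbitrary A2)),
    pureStrat (Classical.arbitrary A2), pureStrat_mixed _, rfl⟩

lemma mm2_inner_bdd (u : A1 → A2 → ℝ) {s1 : A1 → ℝ} (h1 : IsMixed s1) :
    BddAbove {y | ∃ s2, IsMixed s2 ∧ y = EU u s1 s2} := by
  refine ⟨Mbd u, ?_⟩
  rintro y ⟨s2, hs2, rfl⟩
  exact EU_le_Mbd u h1 hs2

lemma mm1_outer_ne (u : A1 → A2 → ℝ) :
    {x | ∃ s2, IsMixed s2 ∧ x = sSup {y | ∃ s1, IsMixed s1 ∧ y = EU u s1 s2}}.Nonempty :=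
  ⟨_, pureStrat (Classical.arbitrary A2), pureStrat_mixed _, rfl⟩

lemma mm1_outer_bdd (u : A1 → A2 → ℝ) :
    BddBelow {x | ∃ s2, IsMixed s2 ∧ x = sSup {y | ∃ s1, IsMixed s1 ∧ y = EU u s1 s2}} := by
  refine ⟨mbd u, ?_⟩
  rintro x ⟨s2, hs2, rfl⟩
  exact le_trans (mbd_le_EU u (pureStrat_mixed (Classical.arbitrary A1)) hs2)
    (le_csSup (mm1_inner_bdd u hs2) ⟨_, pureStrat_mixed _, rfl⟩)

lemma mm2_outer_ne (u : A1 → A2 → ℝ) :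
    {x | ∃ s1, IsMixed s1 ∧ x = sSup {y | ∃ s2, IsMixed s2 ∧ y = EU u s1 s2}}.Nonempty :=
  ⟨_, pureStrat (Classical.arbitrary A1), pureStrat_mixed _, rfl⟩

lemma mm2_outer_bdd (u : A1 → A2 → ℝ) :
    BddBelow {x | ∃ s1, IsMixed s1 ∧ x = sSup {y | ∃ s2, IsMixed s2 ∧ y = EU u s1 s2}} := by
  refine ⟨mbd u, ?_⟩
  rintro x ⟨s1, hs1, rfl⟩
  exact le_trans (mbd_le_EU u hs1 (pureStrat_mixed (Classical.arbitrary A2)))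
    (le_csSup (mm2_inner_bdd u hs1) ⟨_, pureStrat_mixed _, rfl⟩)

lemma mm1_shift (u : A1 → A2 → ℝ) (c : ℝ) :
    mm1 (fun a b => u a b + c) = mm1 u + c := by
  unfold mm1
  have hset : {x | ∃ s2, IsMixed s2 ∧
      x = sSup {y | ∃ s1, IsMixed s1 ∧ y = EU (fun a b => u a b + c) s1 s2}}
      = (fun x => x + c) ''
        {x | ∃ s2, IsMixed s2 ∧ x = sSup {y | ∃ s1, IsMixed s1 ∧ y = EU u s1 s2}} := by
    ext x
    constructor
    · rintro ⟨s2, hs2, rfl⟩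
      refine ⟨sSup {y | ∃ s1, IsMixed s1 ∧ y = EU u s1 s2}, ⟨s2, hs2, rfl⟩, ?_⟩
      have hinner : {y | ∃ s1, IsMixed s1 ∧ y = EU (fun a b => u a b + c) s1 s2}
          = (fun y => y + c) '' {y | ∃ s1, IsMixed s1 ∧ y = EU u s1 s2} := by
        ext y
        constructor
        · rintro ⟨s1, hs1, rfl⟩
          exact ⟨EU u s1 s2, ⟨s1, hs1, rfl⟩, (EU_add_const u c hs1 hs2).symm⟩
        · rintro ⟨y', ⟨s1, hs1, rfl⟩, rfl⟩
          exact ⟨s1, hs1, (EU_add_const u c hs1 hs2).symm⟩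
      rw [hinner, aux_sSup_add_const _ (mm1_inner_ne u s2) (mm1_inner_bdd u hs2)]
    · rintro ⟨x', ⟨s2, hs2, rfl⟩, rfl⟩
      refine ⟨s2, hs2, ?_⟩
      have hinner : {y | ∃ s1, IsMixed s1 ∧ y = EU (fun a b => u a b + c) s1 s2}
          = (fun y => y + c) '' {y | ∃ s1, IsMixed s1 ∧ y = EU u s1 s2} := by
        ext y
        constructor
        · rintro ⟨s1, hs1, rfl⟩
          exact ⟨EU u s1 s2, ⟨s1, hs1, rfl⟩, (EU_add_const u c hs1 hs2).symm⟩
        · rintro ⟨y', ⟨s1, hs1, rfl⟩, rfl⟩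
          exact ⟨s1, hs1, (EU_add_const u c hs1 hs2).symm⟩
      rw [hinner, aux_sSup_add_const _ (mm1_inner_ne u s2) (mm1_inner_bdd u hs2)]
  rw [hset, aux_sInf_add_const _ (mm1_outer_ne u) (mm1_outer_bdd u)]

lemma mm2_shift (u : A1 → A2 → ℝ) (c : ℝ) :
    mm2 (fun a b => u a b + c) = mm2 u + c := by
  unfold mm2
  have hset : {x | ∃ s1, IsMixed s1 ∧
      x = sSup {y | ∃ s2, IsMixed s2 ∧ y = EU (fun a b => u a b + c) s1 s2}}
      = (fun x => x + c) ''
        {x | ∃ s1, IsMixed s1 ∧ x = sSup {y | ∃ s2, IsMixed s2 ∧ y = EU u s1 s2}} := by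
    ext x
    constructor
    · rintro ⟨s1, hs1, rfl⟩
      refine ⟨sSup {y | ∃ s2, IsMixed s2 ∧ y = EU u s1 s2}, ⟨s1, hs1, rfl⟩, ?_⟩
      have hinner : {y | ∃ s2, IsMixed s2 ∧ y = EU (fun a b => u a b + c) s1 s2}
          = (fun y => y + c) '' {y | ∃ s2, IsMixed s2 ∧ y = EU u s1 s2} := by
        ext y
        constructor
        · rintro ⟨s2, hs2, rfl⟩
          exact ⟨EU u s1 s2, ⟨s2, hs2, rfl⟩, (EU_add_const u c hs1 hs2).symm⟩
        · rintro ⟨y', ⟨s2, hs2, rfl⟩, rfl⟩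
          exact ⟨s2, hs2, (EU_add_const u c hs1 hs2).symm⟩
      rw [hinner, aux_sSup_add_const _ (mm2_inner_ne u s1) (mm2_inner_bdd u hs1)]
    · rintro ⟨x', ⟨s1, hs1, rfl⟩, rfl⟩
      refine ⟨s1, hs1, ?_⟩
      have hinner : {y | ∃ s2, IsMixed s2 ∧ y = EU (fun a b => u a b + c) s1 s2}
          = (fun y => y + c) '' {y | ∃ s2, IsMixed s2 ∧ y = EU u s1 s2} := by
        ext y
        constructor
        · rintro ⟨s2, hs2, rfl⟩
          exact ⟨EU u s1 s2, ⟨s2, hs2, rfl⟩, (EU_add_const u c hs1 hs2).symm⟩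
        · rintro ⟨y', ⟨s2, hs2, rfl⟩, rfl⟩
          exact ⟨s2, hs2, (EU_add_const u c hs1 hs2).symm⟩
      rw [hinner, aux_sSup_add_const _ (mm2_inner_ne u s1) (mm2_inner_bdd u hs1)]
  rw [hset, aux_sInf_add_const _ (mm2_outer_ne u) (mm2_outer_bdd u)]

lemma MSW_set_eq (u1 u2 : A1 → A2 → ℝ) :
    {x | ∃ a1 a2, x = u1 a1 a2 + u2 a1 a2}
      = Set.range (fun p : A1 × A2 => u1 p.1 p.2 + u2 p.1 p.2) := by
  ext x
  constructor
  · rintro ⟨a1, a2, rfl⟩; exact ⟨(a1, a2), rfl⟩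
  · rintro ⟨⟨a1, a2⟩, rfl⟩; exact ⟨a1, a2, rfl⟩

lemma MSW_shift (u1 u2 : A1 → A2 → ℝ) (c1 c2 : ℝ) :
    MSW (fun a b => u1 a b + c1) (fun a b => u2 a b + c2) = MSW u1 u2 + (c1 + c2) := by
  unfold MSW
  have hset : {x | ∃ a1 a2, x = u1 a1 a2 + c1 + (u2 a1 a2 + c2)}
      = (fun x => x + (c1 + c2)) '' {x | ∃ a1 a2, x = u1 a1 a2 + u2 a1 a2} := by
    ext x
    constructor
    · rintro ⟨a1, a2, rfl⟩
      exact ⟨u1 a1 a2 + u2 a1 a2, ⟨a1, a2, rfl⟩, by ring⟩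
    · rintro ⟨x', ⟨a1, a2, rfl⟩, rfl⟩
      exact ⟨a1, a2, by ring⟩
  have hne : {x | ∃ a1 a2, x = u1 a1 a2 + u2 a1 a2}.Nonempty :=
    ⟨u1 (Classical.arbitrary A1) (Classical.arbitrary A2)
      + u2 (Classical.arbitrary A1) (Classical.arbitrary A2),
      Classical.arbitrary A1, Classical.arbitrary A2, rfl⟩
  rw [hset, aux_sSup_add_const _ hne
    (by rw [MSW_set_eq]; exact (Set.finite_range _).bddAbove)]

end Aux

/-- the M-PCE value is the unique function on 2-player games with side
payments satisfying maximum social welfare, shift invariance, and minimax dominance. -/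
theorem mpce_value_axiomatization {A1 A2 : Type} [Fintype A1] [Fintype A2]
    [Nonempty A1] [Nonempty A2] :
    SatisfiesAxioms (fun (u1 u2 : A1 → A2 → ℝ) => MPCEval u1 u2) ∧
    ∀ f : (A1 → A2 → ℝ) → (A1 → A2 → ℝ) → ℝ × ℝ,
      SatisfiesAxioms f → ∀ u1 u2, f u1 u2 = MPCEval u1 u2 := by
  constructor
  · refine ⟨fun u1 u2 => by simp [MPCEval]; ring, fun u1 u2 c1 c2 => ?_, fun u1 u2 => ?_⟩
    · simp only [MPCEval]
      rw [MSW_shift, mm1_shift, mm2_shift]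
      exact Prod.ext (by ring) (by ring)
    · exact ⟨fun h => by simp only [MPCEval]; linarith,
        fun h => by simp only [MPCEval]; linarith⟩
  · rintro f ⟨hMSW, hShift, hDom⟩ u1 u2
    set c1 := -mm1 u1 with hc1
    set c2 := -mm2 u2 with hc2
    set v1 : A1 → A2 → ℝ := fun a b => u1 a b + c1 with hv1
    set v2 : A1 → A2 → ℝ := fun a b => u2 a b + c2 with hv2
    have h1 : mm1 v1 = 0 := by rw [hv1, mm1_shift]; ring
    have h2 : mm2 v2 = 0 := by rw [hv2, mm2_shift]; ring
    have heq : (f v1 v2).1 = (f v1 v2).2 :=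
      le_antisymm ((hDom v1 v2).2 (by rw [h1, h2])) ((hDom v1 v2).1 (by rw [h1, h2]))
    have hs := hShift u1 u2 c1 c2
    have hs1 : (f v1 v2).1 = (f u1 u2).1 + c1 := by rw [hs]
    have hs2 : (f v1 v2).2 = (f u1 u2).2 + c2 := by rw [hs]
    have hsum : (f u1 u2).1 + (f u1 u2).2 = MSW u1 u2 := hMSW u1 u2
    have key : (f u1 u2).1 + c1 = (f u1 u2).2 + c2 := by rw [← hs1, ← hs2, heq]
    refine Prod.ext ?_ ?_ <;> simp only [MPCEval, hc1, hc2] at * <;> linarith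
end
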